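/- arXiv:2105.06819 — 4 statements merged into one kernel-verified Lean document; each statement's English description precedes it below -/
import Mathlib

section
/- Let G be a finite simple graph with p vertices and q edges and let k be a positive integer. For every nonzero real number τ, the multiplicity of √k·τ as an eigenvalue of the adjacency matrix A(S(G)_k) equals the multiplicity of τ as an eigenvalue of A(S(G)); consequently, the multiplicity of 0 as an eigenvalue of A(S(G)_k) is p + kq − 2r, where 2r is the rank of A(S(G)). -/
open Matrix

noncomputable section

/-- The multiplicity of `μ` as an eigenvalue of a real matrix `M`:
the dimension of the kernel of `M - μ·Id`. -/
def eigMult {n : Type} [Fintype n] [DecidableEq n] (M : Matrix n n ℝ) (μ : ℝ) : ℕ :=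
  Module.finrank ℝ (LinearMap.ker (Matrix.toLin' (M - μ • (1 : Matrix n n ℝ))))

/-- The energy of a real symmetric matrix: the sum of the absolute values of its
eigenvalues, counted with multiplicity. -/
def matEnergy {n : Type} [Fintype n] [DecidableEq n] (M : Matrix n n ℝ) : ℝ :=
  if h : M.IsHermitian then ∑ i, |h.eigenvalues i| else 0

/-- The incidence matrix of a graph, rows indexed by vertices, columns by edges. -/
def incid {V : Type} [DecidableEq V] (G : SimpleGraph V) : Matrix V G.edgeSet ℝ :=
  fun v e => if v ∈ (e : Sym2 V) then 1 else 0

/-- Adjacency matrix of the subdivision graph `S(G)`. -/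
def AS {V : Type} [DecidableEq V] (G : SimpleGraph V) :
    Matrix (V ⊕ G.edgeSet) (V ⊕ G.edgeSet) ℝ :=
  Matrix.fromBlocks 0 (incid G) (incid G)ᵀ 0

/-- Adjacency matrix of `S(G)_k`. -/
def ASk {V : Type} [DecidableEq V] (G : SimpleGraph V) (k : ℕ) :
    Matrix (V ⊕ (Fin k × G.edgeSet)) (V ⊕ (Fin k × G.edgeSet)) ℝ :=
  fun x y => match x, y with
    | Sum.inl v, Sum.inr (_, e) => if v ∈ (e : Sym2 V) then 1 else 0
    | Sum.inr (_, e), Sum.inl v => if v ∈ (e : Sym2 V) then 1 else 0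
    | _, _ => 0

/-- Adjacency matrix of `S(G)_t^n`. -/
def AStn {V : Type} [DecidableEq V] (G : SimpleGraph V) (n t : ℕ) :
    Matrix ((Fin (n + 1) × V) ⊕ (Fin (t + 1) × G.edgeSet))
           ((Fin (n + 1) × V) ⊕ (Fin (t + 1) × G.edgeSet)) ℝ :=
  fun x y => match x, y with
    | Sum.inl (_, v), Sum.inr (_, e) => if v ∈ (e : Sym2 V) then 1 else 0
    | Sum.inr (_, e), Sum.inl (_, v) => if v ∈ (e : Sym2 V) then 1 else 0
    | _, _ => 0

/-- The subdivision graph `S(G)` as a simple graph. -/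
def SGGraph {V : Type} (G : SimpleGraph V) : SimpleGraph (V ⊕ G.edgeSet) where
  Adj x y :=
    (∃ (v : V) (e : G.edgeSet), x = Sum.inl v ∧ y = Sum.inr e ∧ v ∈ (e : Sym2 V)) ∨
    (∃ (v : V) (e : G.edgeSet), x = Sum.inr e ∧ y = Sum.inl v ∧ v ∈ (e : Sym2 V))
  symm := by
    constructor
    rintro x y (⟨v, e, rfl, rfl, h⟩ | ⟨v, e, rfl, rfl, h⟩)
    · exact Or.inr ⟨v, e, rfl, rfl, h⟩
    · exact Or.inl ⟨v, e, rfl, rfl, h⟩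
  loopless := by
    constructor
    rintro x (⟨v, e, h1, h2, _⟩ | ⟨v, e, h1, h2, _⟩) <;> subst h1 <;> simp_all

/-- The graph `S(G)_k`. -/
def SGkGraph {V : Type} (G : SimpleGraph V) (k : ℕ) :
    SimpleGraph (V ⊕ (Fin k × G.edgeSet)) where
  Adj x y :=
    (∃ (v : V) (ie : Fin k × G.edgeSet),
        x = Sum.inl v ∧ y = Sum.inr ie ∧ v ∈ (ie.2 : Sym2 V)) ∨
    (∃ (v : V) (ie : Fin k × G.edgeSet),
        x = Sum.inr ie ∧ y = Sum.inl v ∧ v ∈ (ie.2 : Sym2 V))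
  symm := by
    constructor
    rintro x y (⟨v, ie, rfl, rfl, h⟩ | ⟨v, ie, rfl, rfl, h⟩)
    · exact Or.inr ⟨v, ie, rfl, rfl, h⟩
    · exact Or.inl ⟨v, ie, rfl, rfl, h⟩
  loopless := by
    constructor
    rintro x (⟨v, ie, h1, h2, _⟩ | ⟨v, ie, h1, h2, _⟩) <;> subst h1 <;> simp_all

/-- The graph `S(G)_t^n`. -/
def SGtnGraph {V : Type} (G : SimpleGraph V) (n t : ℕ) :
    SimpleGraph ((Fin (n + 1) × V) ⊕ (Fin (t + 1) × G.edgeSet)) where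
  Adj x y :=
    (∃ (iv : Fin (n + 1) × V) (je : Fin (t + 1) × G.edgeSet),
        x = Sum.inl iv ∧ y = Sum.inr je ∧ iv.2 ∈ (je.2 : Sym2 V)) ∨
    (∃ (iv : Fin (n + 1) × V) (je : Fin (t + 1) × G.edgeSet),
        x = Sum.inr je ∧ y = Sum.inl iv ∧ iv.2 ∈ (je.2 : Sym2 V))
  symm := by
    constructor
    rintro x y (⟨iv, je, rfl, rfl, h⟩ | ⟨iv, je, rfl, rfl, h⟩)
    · exact Or.inr ⟨iv, je, rfl, rfl, h⟩
    · exact Or.inl ⟨iv, je, rfl, rfl, h⟩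
  loopless := by
    constructor
    rintro x (⟨iv, je, h1, h2, _⟩ | ⟨iv, je, h1, h2, _⟩) <;> subst h1 <;> simp_all

open scoped Classical in
/-- The Randić matrix of a graph: entry `1/√(deg u · deg v)` when `u ~ v`, else `0`. -/
def randicMatrix {W : Type} (H : SimpleGraph W) : Matrix W W ℝ :=
  fun u v =>
    if H.Adj u v then
      1 / Real.sqrt ((Nat.card (H.neighborSet u) * Nat.card (H.neighborSet v) : ℕ) : ℝ)
    else 0

/-- `H` has no isolated vertices. -/
def NoIsolated {W : Type} (H : SimpleGraph W) : Prop := ∀ v, ∃ u, H.Adj v u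

/-- The matrix `B` used in the construction of `F₁^m(G)`: all entries `1`
except `B(1,1) = 0` and `B(i, m+1-i) = 0` for `2 ≤ i ≤ m-1` (1-based indexing). -/
def Bmat (m : ℕ) : Matrix (Fin m) (Fin m) ℝ :=
  fun i j =>
    if (i.val = 0 ∧ j.val = 0) ∨ (i.val ≠ 0 ∧ j.val ≠ 0 ∧ i.val + j.val = m - 1) then 0 else 1

lemma Bmat_symm (m : ℕ) (i j : Fin m) : Bmat m i j = Bmat m j i := by
  unfold Bmat
  by_cases h : (i.val = 0 ∧ j.val = 0) ∨ (i.val ≠ 0 ∧ j.val ≠ 0 ∧ i.val + j.val = m - 1)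
  · rw [if_pos h, if_pos (by omega)]
  · rw [if_neg h, if_neg (by omega)]

/-- The graph `F₁^m(G)`: `(i,u) ~ (j,v)` iff `B(i,j) = 1` and `u ~ v` in `G`. -/
def F1Graph {V : Type} (m : ℕ) (G : SimpleGraph V) : SimpleGraph (Fin m × V) where
  Adj x y := Bmat m x.1 y.1 = 1 ∧ G.Adj x.2 y.2
  symm := by
    constructor
    rintro x y ⟨hb, ha⟩
    refine ⟨?_, ha.symm⟩
    rw [Bmat_symm]; exact hb
  loopless := ⟨fun x h => G.irrefl h.2⟩

/-- The matrix `H` used in the construction of `F₂^m(G)`: all entries `1`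
except `H(i,i) = 0` for `2 ≤ i ≤ m` (1-based indexing). -/
def HmatF2 (m : ℕ) : Matrix (Fin m) (Fin m) ℝ :=
  fun i j => if i.val = j.val ∧ i.val ≠ 0 then 0 else 1

lemma HmatF2_symm (m : ℕ) (i j : Fin m) : HmatF2 m i j = HmatF2 m j i := by
  unfold HmatF2
  by_cases h : i.val = j.val ∧ i.val ≠ 0
  · rw [if_pos h, if_pos (by omega)]
  · rw [if_neg h, if_neg (by omega)]

/-- The graph `F₂^m(G)`: `(i,u) ~ (j,v)` iff `H(i,j) = 1` and `u ~ v` in `G`. -/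
def F2Graph {V : Type} (m : ℕ) (G : SimpleGraph V) : SimpleGraph (Fin m × V) where
  Adj x y := HmatF2 m x.1 y.1 = 1 ∧ G.Adj x.2 y.2
  symm := by
    constructor
    rintro x y ⟨hb, ha⟩
    refine ⟨?_, ha.symm⟩
    rw [HmatF2_symm]; exact hb
  loopless := ⟨fun x h => G.irrefl h.2⟩

/-- The tensor (Kronecker) product of simple graphs. -/
def tensorGraph {W U : Type} (H : SimpleGraph W) (G : SimpleGraph U) :
    SimpleGraph (W × U) where
  Adj x y := H.Adj x.1 y.1 ∧ G.Adj x.2 y.2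
  symm := ⟨fun _ _ h => ⟨h.1.symm, h.2.symm⟩⟩
  loopless := ⟨fun x h => H.irrefl h.1⟩


section auxSubdivision

set_option linter.unusedSectionVars false in
lemma memKer_fromBlocks {α β : Type} [Fintype α] [Fintype β] [DecidableEq α] [DecidableEq β]
    (B : Matrix α β ℝ) (μ : ℝ) (w : (α ⊕ β) → ℝ) :
    w ∈ LinearMap.ker (Matrix.toLin'
      (Matrix.fromBlocks 0 B Bᵀ 0 - μ • (1 : Matrix (α ⊕ β) (α ⊕ β) ℝ))) ↔
    (∀ a, ∑ b, B a b * w (Sum.inr b) = μ * w (Sum.inl a)) ∧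
    (∀ b, ∑ a, B a b * w (Sum.inl a) = μ * w (Sum.inr b)) := by
  rw [LinearMap.mem_ker]
  have h : ∀ x, (Matrix.toLin'
      (Matrix.fromBlocks 0 B Bᵀ 0 - μ • (1 : Matrix (α ⊕ β) (α ⊕ β) ℝ)) w) x =
      Sum.elim (fun a => (∑ b, B a b * w (Sum.inr b)) - μ * w (Sum.inl a))
        (fun b => (∑ a, B a b * w (Sum.inl a)) - μ * w (Sum.inr b)) x := by
    intro x
    cases x with
    | inl a =>
      simp [Matrix.toLin'_apply, Matrix.mulVec, dotProduct, Fintype.sum_sum_type,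
        Matrix.sub_apply, Matrix.one_apply, sub_mul, Finset.sum_sub_distrib,
        ite_mul, Matrix.transpose_apply]
    | inr b =>
      simp [Matrix.toLin'_apply, Matrix.mulVec, dotProduct, Fintype.sum_sum_type,
        Matrix.sub_apply, Matrix.one_apply, sub_mul, Finset.sum_sub_distrib,
        ite_mul, Matrix.transpose_apply]
  constructor
  · intro h0
    constructor
    · intro a
      have := congrFun h0 (Sum.inl a)
      rw [h (Sum.inl a)] at this
      simpa [sub_eq_zero] using this
    · intro b
      have := congrFun h0 (Sum.inr b)
      rw [h (Sum.inr b)] at this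
      simpa [sub_eq_zero] using this
  · rintro ⟨h1, h2⟩
    funext x
    rw [h x]
    cases x with
    | inl a => simpa [sub_eq_zero] using h1 a
    | inr b => simpa [sub_eq_zero] using h2 b

set_option linter.unusedSectionVars false in
lemma mem_ker_mulVecLin {α β : Type} [Fintype α] [Fintype β] [DecidableEq β]
    (B : Matrix α β ℝ) (x : β → ℝ) :
    x ∈ LinearMap.ker B.mulVecLin ↔ ∀ a, ∑ b, B a b * x b = 0 := by
  rw [LinearMap.mem_ker]
  constructor
  · intro h a
    have := congrFun h a
    simpa [Matrix.mulVecLin_apply, Matrix.mulVec, dotProduct] using this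
  · intro h
    funext a
    simpa [Matrix.mulVecLin_apply, Matrix.mulVec, dotProduct] using h a

/-- `k`-fold horizontal repetition of a matrix `B`. -/
def Bk {α β : Type} (B : Matrix α β ℝ) (k : ℕ) : Matrix α (Fin k × β) ℝ :=
  fun a p => B a p.2

/-- The linear map summing a `Fin k × β`-indexed vector over the `Fin k` factor. -/
def sumT (k : ℕ) (β : Type) [Fintype β] : ((Fin k × β) → ℝ) →ₗ[ℝ] (β → ℝ) where
  toFun y b := ∑ i, y (i, b)
  map_add' y z := by funext b; simp [Finset.sum_add_distrib]
  map_smul' c y := by funext b; simp [Finset.mul_sum]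

lemma sumT_surjective (k : ℕ) (hk : 0 < k) (β : Type) [Fintype β] [DecidableEq β] :
    Function.Surjective (sumT k β) := by
  intro z
  refine ⟨fun p => if p.1 = ⟨0, hk⟩ then z p.2 else 0, ?_⟩
  funext b
  simp [sumT, Finset.sum_ite_eq']

lemma ker_transpose_eq {α β : Type} [Fintype α] [Fintype β] [DecidableEq α] [DecidableEq β]
    (B : Matrix α β ℝ) (k : ℕ) (hk : 0 < k) :
    LinearMap.ker (Bk B k)ᵀ.mulVecLin = LinearMap.ker Bᵀ.mulVecLin := by
  ext x
  rw [mem_ker_mulVecLin, mem_ker_mulVecLin]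
  constructor
  · intro h b
    simpa [Matrix.transpose_apply, Bk] using h (⟨0, hk⟩, b)
  · intro h p
    simpa [Matrix.transpose_apply, Bk] using h p.2

lemma ker_block_eq {α β : Type} [Fintype α] [Fintype β] [DecidableEq α] [DecidableEq β]
    (B : Matrix α β ℝ) (k : ℕ) :
    LinearMap.ker (Bk B k).mulVecLin = LinearMap.ker (B.mulVecLin ∘ₗ sumT k β) := by
  ext y
  rw [mem_ker_mulVecLin, LinearMap.mem_ker]
  constructor
  · intro h
    funext a
    have := h a
    rw [Fintype.sum_prod_type, Finset.sum_comm] at this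
    simpa [Matrix.mulVecLin_apply, Matrix.mulVec, dotProduct, sumT, Finset.mul_sum, Bk]
      using this
  · intro h a
    have := congrFun h a
    simp [Matrix.mulVecLin_apply, Matrix.mulVec, dotProduct, sumT, Finset.mul_sum] at this
    rw [Fintype.sum_prod_type, Finset.sum_comm]
    simpa [Bk] using this

lemma finrank_ker_fromBlocks {α β : Type} [Fintype α] [Fintype β] [DecidableEq α] [DecidableEq β]
    (B : Matrix α β ℝ) :
    Module.finrank ℝ (LinearMap.ker (Matrix.toLin'
        (Matrix.fromBlocks 0 B Bᵀ 0 - (0:ℝ) • (1 : Matrix (α ⊕ β) (α ⊕ β) ℝ)))) =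
      Module.finrank ℝ (LinearMap.ker Bᵀ.mulVecLin)
        + Module.finrank ℝ (LinearMap.ker B.mulVecLin) := by
  rw [← Module.finrank_prod]
  apply LinearEquiv.finrank_eq
  refine
  { toFun := fun w =>
      (⟨fun a => w.1 (Sum.inl a), ?_⟩, ⟨fun b => w.1 (Sum.inr b), ?_⟩)
    invFun := fun xz =>
      ⟨Sum.elim xz.1.1 xz.2.1, ?_⟩
    map_add' := fun w1 w2 => by
      refine Prod.ext (Subtype.ext ?_) (Subtype.ext ?_) <;> rfl
    map_smul' := fun c w => by
      refine Prod.ext (Subtype.ext ?_) (Subtype.ext ?_) <;> rfl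
    left_inv := fun w => Subtype.ext (funext fun x => by cases x <;> rfl)
    right_inv := fun xz => Prod.ext (Subtype.ext rfl) (Subtype.ext rfl) }
  · have h := (memKer_fromBlocks B 0 w.1).mp w.2
    rw [mem_ker_mulVecLin]
    intro b
    simpa [Matrix.transpose_apply] using h.2 b
  · have h := (memKer_fromBlocks B 0 w.1).mp w.2
    rw [mem_ker_mulVecLin]
    intro a
    simpa using h.1 a
  · rw [memKer_fromBlocks]
    constructor
    · intro a
      simpa using (mem_ker_mulVecLin B xz.2.1).mp xz.2.2 a
    · intro b
      simpa [Matrix.transpose_apply] using (mem_ker_mulVecLin Bᵀ xz.1.1).mp xz.1.2 b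

lemma count_zero {α β : Type} [Fintype α] [Fintype β] [DecidableEq α] [DecidableEq β]
    (B : Matrix α β ℝ) (k : ℕ) (hk : 0 < k) :
    Module.finrank ℝ (LinearMap.ker (Matrix.toLin'
        (Matrix.fromBlocks 0 (Bk B k) (Bk B k)ᵀ 0
          - (0:ℝ) • (1 : Matrix (α ⊕ (Fin k × β)) (α ⊕ (Fin k × β)) ℝ))))
      + (Matrix.fromBlocks 0 B Bᵀ 0).rank
      = Fintype.card α + k * Fintype.card β := by
  have e1 := finrank_ker_fromBlocks (Bk B k)
  rw [ker_transpose_eq B k hk, ker_block_eq B k] at e1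
  have e2 := LinearMap.finrank_range_add_finrank_ker (B.mulVecLin ∘ₗ sumT k β)
  rw [LinearMap.range_comp, LinearMap.range_eq_top.mpr (sumT_surjective k hk β),
    Submodule.map_top] at e2
  rw [Module.finrank_fintype_fun_eq_card, Fintype.card_prod, Fintype.card_fin] at e2
  have e3 := LinearMap.finrank_range_add_finrank_ker B.mulVecLin
  rw [Module.finrank_fintype_fun_eq_card] at e3
  have e4 := LinearMap.finrank_range_add_finrank_ker Bᵀ.mulVecLin
  rw [Module.finrank_fintype_fun_eq_card] at e4
  have e5 := LinearMap.finrank_range_add_finrank_ker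
    (Matrix.fromBlocks 0 B Bᵀ 0).mulVecLin
  rw [Module.finrank_fintype_fun_eq_card, Fintype.card_sum] at e5
  have e6 : (Matrix.fromBlocks 0 B Bᵀ 0).rank
      = Module.finrank ℝ (LinearMap.range (Matrix.fromBlocks 0 B Bᵀ 0).mulVecLin) := rfl
  have e7 : Module.finrank ℝ (LinearMap.ker (Matrix.fromBlocks 0 B Bᵀ 0).mulVecLin)
      = Module.finrank ℝ (LinearMap.ker Bᵀ.mulVecLin)
        + Module.finrank ℝ (LinearMap.ker B.mulVecLin) := by
    have := finrank_ker_fromBlocks B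
    rw [show Matrix.fromBlocks 0 B Bᵀ 0 - (0:ℝ) • (1 : Matrix (α ⊕ β) (α ⊕ β) ℝ)
        = Matrix.fromBlocks 0 B Bᵀ 0 by simp] at this
    exact this
  omega

set_option maxHeartbeats 800000 in
lemma count_eig {α β : Type} [Fintype α] [Fintype β] [DecidableEq α] [DecidableEq β]
    (B : Matrix α β ℝ) (k : ℕ) (hk : 0 < k) (τ : ℝ) (hτ : τ ≠ 0) :
    Module.finrank ℝ (LinearMap.ker (Matrix.toLin'
        (Matrix.fromBlocks 0 (Bk B k) (Bk B k)ᵀ 0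
          - (Real.sqrt k * τ) • (1 : Matrix (α ⊕ (Fin k × β)) (α ⊕ (Fin k × β)) ℝ))))
      = Module.finrank ℝ (LinearMap.ker (Matrix.toLin'
        (Matrix.fromBlocks 0 B Bᵀ 0 - τ • (1 : Matrix (α ⊕ β) (α ⊕ β) ℝ)))) := by
  set s : ℝ := Real.sqrt k with hs_def
  have hs : s * s = (k : ℝ) := Real.mul_self_sqrt (by positivity)
  have hk0 : (0:ℝ) < (k:ℝ) := by exact_mod_cast hk
  have hs0 : s ≠ 0 := ne_of_gt (Real.sqrt_pos.mpr hk0)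
  have hlam : s * τ ≠ 0 := mul_ne_zero hs0 hτ
  apply LinearEquiv.finrank_eq
  refine
  { toFun := fun w =>
      ⟨Sum.elim (fun a => w.1 (Sum.inl a))
        (fun b => s⁻¹ * ∑ i : Fin k, w.1 (Sum.inr (i, b))), ?_⟩
    invFun := fun z =>
      ⟨Sum.elim (fun a => z.1 (Sum.inl a)) (fun p => s⁻¹ * z.1 (Sum.inr p.2)), ?_⟩
    map_add' := fun w1 w2 => by
      refine Subtype.ext (funext fun x => ?_)
      cases x with
      | inl a => simp
      | inr b => simp [Finset.sum_add_distrib, mul_add]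
    map_smul' := fun c w => by
      refine Subtype.ext (funext fun x => ?_)
      cases x with
      | inl a => simp
      | inr b =>
        simp only [Submodule.coe_smul, Pi.smul_apply, Sum.elim_inr, smul_eq_mul,
          Finset.mul_sum]
        exact Finset.sum_congr rfl fun _ _ => by simp only [RingHom.id_apply]; ring
    left_inv := fun w => ?_
    right_inv := fun z => ?_ }
  · have hw := (memKer_fromBlocks (Bk B k) (s * τ) w.1).mp w.2
    rw [memKer_fromBlocks]
    constructor
    · intro a
      have key : ∑ b, B a b * ∑ i : Fin k, w.1 (Sum.inr (i, b))
          = s * τ * w.1 (Sum.inl a) := by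
        have h1 := hw.1 a
        rw [Fintype.sum_prod_type, Finset.sum_comm] at h1
        simpa [Bk, Finset.mul_sum] using h1
      have expand : ∑ b, B a b * (Sum.elim (fun a => w.1 (Sum.inl a))
            (fun b => s⁻¹ * ∑ i : Fin k, w.1 (Sum.inr (i, b))) (Sum.inr b))
          = s⁻¹ * ∑ b, B a b * ∑ i : Fin k, w.1 (Sum.inr (i, b)) := by
        rw [Finset.mul_sum]
        refine Finset.sum_congr rfl fun b _ => by
          simp only [Sum.elim_inr]; ring
      rw [expand, key]
      simp only [Sum.elim_inl]
      field_simp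
    · intro b
      have hsum : ∀ i : Fin k, ∑ a, B a b * w.1 (Sum.inl a)
          = s * τ * w.1 (Sum.inr (i, b)) := by
        intro i
        simpa [Bk] using hw.2 (i, b)
      have htot : (k : ℝ) * ∑ a, B a b * w.1 (Sum.inl a)
          = s * τ * ∑ i : Fin k, w.1 (Sum.inr (i, b)) := by
        calc (k : ℝ) * ∑ a, B a b * w.1 (Sum.inl a)
            = ∑ _i : Fin k, ∑ a, B a b * w.1 (Sum.inl a) := by
              simp [Finset.sum_const, mul_comm]
          _ = ∑ i : Fin k, s * τ * w.1 (Sum.inr (i, b)) :=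
              Finset.sum_congr rfl fun i _ => hsum i
          _ = s * τ * ∑ i : Fin k, w.1 (Sum.inr (i, b)) := by
              rw [Finset.mul_sum]
      simp only [Sum.elim_inl, Sum.elim_inr]
      rw [← hs] at htot
      have h5 : s * ∑ a, B a b * w.1 (Sum.inl a)
          = τ * ∑ i : Fin k, w.1 (Sum.inr (i, b)) := by
        apply mul_left_cancel₀ hs0
        rw [← mul_assoc]
        linear_combination htot
      field_simp
      linear_combination h5
  · have hz := (memKer_fromBlocks B τ z.1).mp z.2
    rw [memKer_fromBlocks]
    constructor
    · intro a
      simp only [Sum.elim_inl, Sum.elim_inr]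
      rw [Fintype.sum_prod_type]
      have : ∀ i : Fin k, ∑ b, Bk B k a (i, b) * (s⁻¹ * z.1 (Sum.inr b))
          = s⁻¹ * (τ * z.1 (Sum.inl a)) := by
        intro i
        have expand : ∑ b, Bk B k a (i, b) * (s⁻¹ * z.1 (Sum.inr b))
            = s⁻¹ * ∑ b, B a b * z.1 (Sum.inr b) := by
          rw [Finset.mul_sum]
          refine Finset.sum_congr rfl fun b _ => by simp [Bk]; ring
        rw [expand, hz.1 a]
      rw [Finset.sum_congr rfl fun i _ => this i]
      simp only [Finset.sum_const, Finset.card_univ, Fintype.card_fin, nsmul_eq_mul]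
      rw [← hs]
      field_simp
    · intro p
      simp only [Sum.elim_inl, Sum.elim_inr]
      have : ∑ a, Bk B k a p * z.1 (Sum.inl a) = τ * z.1 (Sum.inr p.2) := by
        have expand : ∑ a, Bk B k a p * z.1 (Sum.inl a)
            = ∑ a, B a p.2 * z.1 (Sum.inl a) := rfl
        rw [expand, hz.2 p.2]
      rw [this]
      field_simp
  · have hw := (memKer_fromBlocks (Bk B k) (s * τ) w.1).mp w.2
    refine Subtype.ext (funext fun x => ?_)
    cases x with
    | inl a => rfl
    | inr p =>
      obtain ⟨i, b⟩ := p
      have hconst : ∀ j : Fin k, w.1 (Sum.inr (j, b)) = w.1 (Sum.inr (i, b)) := by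
        intro j
        have ej := hw.2 (j, b)
        have ei := hw.2 (i, b)
        simp only [Bk] at ej ei
        exact mul_left_cancel₀ hlam (ej.symm.trans ei)
      show s⁻¹ * (s⁻¹ * ∑ j : Fin k, w.1 (Sum.inr (j, b))) = w.1 (Sum.inr (i, b))
      rw [Finset.sum_congr rfl fun j _ => hconst j]
      simp only [Finset.sum_const, Finset.card_univ, Fintype.card_fin, nsmul_eq_mul]
      rw [← hs]
      field_simp
  · refine Subtype.ext (funext fun x => ?_)
    cases x with
    | inl a => rfl
    | inr b =>
      show s⁻¹ * ∑ _i : Fin k, s⁻¹ * z.1 (Sum.inr b) = z.1 (Sum.inr b)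
      simp only [Finset.sum_const, Finset.card_univ, Fintype.card_fin, nsmul_eq_mul]
      rw [← hs]
      field_simp

lemma ASk_eq {V : Type} [DecidableEq V] (G : SimpleGraph V) (k : ℕ) :
    ASk G k = Matrix.fromBlocks 0 (Bk (incid G) k) (Bk (incid G) k)ᵀ 0 := by
  ext x y
  cases x <;> cases y <;> rfl

end auxSubdivision

/-- For every nonzero real `τ`, the multiplicity of `√k·τ` as an eigenvalue of
`A(S(G)_k)` equals the multiplicity of `τ` as an eigenvalue of `A(S(G))`; consequently, the
multiplicity of `0` as an eigenvalue of `A(S(G)_k)` is `p + kq − 2r`, where `2r = rank A(S(G))`. -/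

theorem stmt_0 (V : Type) [Fintype V] [DecidableEq V] (G : SimpleGraph V) [DecidableRel G.Adj]
    (k : ℕ) (hk : 0 < k) :
    (∀ τ : ℝ, τ ≠ 0 →
        eigMult (ASk G k) (Real.sqrt (k : ℝ) * τ) = eigMult (AS G) τ) ∧
    eigMult (ASk G k) 0 =
      Fintype.card V + k * Fintype.card G.edgeSet - (AS G).rank := by
  have hAS : AS G = Matrix.fromBlocks 0 (incid G) (incid G)ᵀ 0 := rfl
  constructor
  · intro τ hτ
    unfold eigMult
    rw [ASk_eq G k, hAS]
    exact count_eig (incid G) k hk τ hτ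
  · have h := count_zero (incid G) k hk
    unfold eigMult
    rw [ASk_eq G k, hAS]
    omega


end
end

section
/- Let G be an r₁-regular finite simple graph on p vertices with adjacency eigenvalues λ₁, …, λ_p (counted with multiplicity), and let k be a positive integer. Then ε(S(G)_k) = 2√k · Σ_{i=1}^{p} √(λᵢ + r₁). -/
open Matrix

noncomputable section

open Polynomial

section Stmt2Aux

variable {n : Type} [Fintype n] [DecidableEq n]

lemma aux_charmatrix_eq (M : Matrix n n ℝ) :
    charmatrix M = Matrix.diagonal (fun _ : n => (X : ℝ[X])) - M.map C := by
  ext i j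
  rw [charmatrix_apply]
  simp [Matrix.sub_apply, Matrix.map_apply]

lemma aux_det_conj (U W D : Matrix n n ℝ) (hUW : U * W = 1) (f : ℝ[X]) :
    (Matrix.diagonal (fun _ : n => f) - (U * D * W).map C).det
      = (Matrix.diagonal (fun _ : n => f) - D.map C).det := by
  have hC : ∀ (P Q : Matrix n n ℝ), (P * Q).map (C : ℝ →+* ℝ[X]) = P.map C * Q.map C :=
    fun P Q => Matrix.map_mul
  have hdiag : Matrix.diagonal (fun _ : n => f) = f • (1 : Matrix n n ℝ[X]) := by
    rw [smul_one_eq_diagonal]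
  have key : Matrix.diagonal (fun _ : n => f) - (U * D * W).map C
      = U.map C * (Matrix.diagonal (fun _ : n => f) - D.map C) * W.map C := by
    rw [Matrix.mul_sub, Matrix.sub_mul, hdiag]
    congr 1
    · rw [Matrix.mul_smul, Matrix.mul_one, Matrix.smul_mul, ← hC, hUW]
      simp
    · rw [hC, hC]
  rw [key, Matrix.det_mul, Matrix.det_mul]
  have h1 : (U.map (C : ℝ →+* ℝ[X])).det * (W.map C).det = 1 := by
    rw [← Matrix.det_mul, ← hC, hUW]; simp
  rw [mul_right_comm, h1, one_mul]

lemma aux_spectral (M : Matrix n n ℝ) (h : M.IsHermitian) :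
    M = (h.eigenvectorUnitary : Matrix n n ℝ) * Matrix.diagonal h.eigenvalues
      * (star h.eigenvectorUnitary : Matrix n n ℝ) := by
  have := h.spectral_theorem
  rwa [RCLike.ofReal_real_eq_id, Function.id_comp] at this

lemma aux_hermitian_charpoly (M : Matrix n n ℝ) (h : M.IsHermitian) :
    M.charpoly = ∏ i, (X - C (h.eigenvalues i)) := by
  rw [Matrix.charpoly, aux_charmatrix_eq]
  conv_lhs => rw [aux_spectral M h]
  rw [aux_det_conj _ _ _ (by
    simpa using (Matrix.mem_unitaryGroup_iff).mp h.eigenvectorUnitary.2)]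
  rw [show ((Matrix.diagonal h.eigenvalues).map (C : ℝ →+* ℝ[X]) : Matrix n n ℝ[X])
      = Matrix.diagonal (fun i => C (h.eigenvalues i)) from Matrix.diagonal_map (by simp)]
  rw [Matrix.diagonal_sub, Matrix.det_diagonal]

variable {p q : Type} [Fintype p] [DecidableEq p] [Fintype q] [DecidableEq q]

lemma aux_block (B : Matrix p q ℝ) :
    (Matrix.fromBlocks 0 B Bᵀ 0).charpoly * X ^ (Fintype.card p)
      = (Matrix.diagonal (fun _ : p => (X : ℝ[X]) ^ 2) - (B * Bᵀ).map C).det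
          * X ^ (Fintype.card q) := by
  set dP : Matrix p p ℝ[X] := Matrix.diagonal (fun _ => (X : ℝ[X]))
  set dQ : Matrix q q ℝ[X] := Matrix.diagonal (fun _ => (X : ℝ[X]))
  have hchar : charmatrix (Matrix.fromBlocks 0 B Bᵀ 0)
      = Matrix.fromBlocks dP (-(B.map C)) (-(Bᵀ.map C)) dQ := by
    rw [aux_charmatrix_eq]
    ext (i | i) (j | j) <;>
      simp [Matrix.sub_apply, Matrix.map_apply, Matrix.fromBlocks, dP, dQ,
        Matrix.diagonal_apply]
  have hH : charmatrix (Matrix.fromBlocks 0 B Bᵀ 0)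
        * Matrix.fromBlocks dP 0 (Bᵀ.map C) 1
      = Matrix.fromBlocks
          (Matrix.diagonal (fun _ : p => (X : ℝ[X]) ^ 2) - (B * Bᵀ).map C)
          (-(B.map C)) 0 dQ := by
    rw [hchar, Matrix.fromBlocks_multiply]
    have h11 : dP * dP + -B.map C * (Bᵀ.map C)
        = Matrix.diagonal (fun _ : p => (X : ℝ[X]) ^ 2) - (B * Bᵀ).map C := by
      rw [show dP * dP = Matrix.diagonal (fun _ : p => (X : ℝ[X]) * X) from
        Matrix.diagonal_mul_diagonal _ _]
      rw [Matrix.neg_mul, ← sub_eq_add_neg,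
        show (B * Bᵀ).map (C : ℝ →+* ℝ[X]) = B.map C * Bᵀ.map C from Matrix.map_mul]
      congr 1
      ext i j
      simp [Matrix.diagonal_apply, sq]
    have h21 : -Bᵀ.map C * dP + dQ * (Bᵀ.map C) = 0 := by
      ext i j
      rw [Matrix.add_apply, Matrix.neg_mul, Matrix.neg_apply, Matrix.mul_diagonal,
        Matrix.diagonal_mul, Matrix.zero_apply, mul_comm]
      ring
    rw [h11, h21]
    congr 1 <;> simp
  have hdet := congrArg Matrix.det hH
  rw [Matrix.det_mul, Matrix.det_fromBlocks_zero₁₂, Matrix.det_fromBlocks_zero₂₁] at hdet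
  simpa [dP, dQ, Matrix.det_diagonal, Matrix.charpoly] using hdet

variable {V : Type} [Fintype V] [DecidableEq V]


lemma aux_NNt (G : SimpleGraph V) [DecidableRel G.Adj] (r₁ : ℕ)
    (hreg : G.IsRegularOfDegree r₁) :
    (incid G) * (incid G)ᵀ = G.adjMatrix ℝ + (r₁ : ℝ) • 1 := by
  have hinc := G.incMatrix_mul_transpose (R := ℝ)
  ext u v
  have step1 : ((incid G) * (incid G)ᵀ) u v
      = (G.incMatrix ℝ * (G.incMatrix ℝ)ᵀ) u v := by
    rw [Matrix.mul_apply, Matrix.mul_apply]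
    have e1 : ∀ e : G.edgeSet, incid G u e * (incid G)ᵀ e v
        = G.incMatrix ℝ u ↑e * (G.incMatrix ℝ)ᵀ ↑e v := by
      intro e
      have he : (e : Sym2 V) ∈ G.edgeSet := e.2
      simp only [Matrix.transpose_apply, incid, SimpleGraph.incMatrix_apply,
        Set.indicator_apply, SimpleGraph.incidenceSet, Pi.one_apply]
      by_cases h1 : u ∈ (e : Sym2 V) <;> by_cases h2 : v ∈ (e : Sym2 V) <;>
        simp [h1, h2, he, Set.mem_sep_iff]
    rw [Finset.sum_congr rfl (fun e _ => e1 e),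
      ← Finset.sum_subtype G.edgeFinset (fun x => G.mem_edgeFinset)
        (fun e => G.incMatrix ℝ u e * (G.incMatrix ℝ)ᵀ e v)]
    exact Finset.sum_subset (Finset.subset_univ _) (fun e _ he => by
      rw [SimpleGraph.mem_edgeFinset] at he
      simp [SimpleGraph.incMatrix_of_notMem_incidenceSet _ (fun hc => he hc.1)])
  rw [step1, hinc]
  by_cases h : u = v
  · subst h
    simp [hreg u, Matrix.one_apply]
  · simp [h, Matrix.one_apply, Matrix.smul_apply]

lemma aux_BBt (G : SimpleGraph V) [DecidableRel G.Adj] (r₁ : ℕ)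
    (hreg : G.IsRegularOfDegree r₁) (k : ℕ) :
    (Matrix.of fun v (ie : Fin k × G.edgeSet) => incid G v ie.2)
      * (Matrix.of fun v (ie : Fin k × G.edgeSet) => incid G v ie.2)ᵀ
      = (k : ℝ) • (G.adjMatrix ℝ + (r₁ : ℝ) • 1) := by
  have h := aux_NNt G r₁ hreg
  ext u v
  rw [Matrix.mul_apply, Fintype.sum_prod_type, Matrix.smul_apply]
  have key : ∀ i : Fin k, (∑ e : G.edgeSet,
      (Matrix.of fun v (ie : Fin k × G.edgeSet) => incid G v ie.2) u (i, e)
        * (Matrix.of fun v (ie : Fin k × G.edgeSet) => incid G v ie.2)ᵀ (i, e) v)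
      = ((incid G) * (incid G)ᵀ) u v := by
    intro i
    rw [Matrix.mul_apply]
    rfl
  rw [Finset.sum_congr rfl (fun i _ => key i), Finset.sum_const, Finset.card_univ,
    Fintype.card_fin, nsmul_eq_mul, h, smul_eq_mul]

lemma aux_eig_nonneg (G : SimpleGraph V) [DecidableRel G.Adj] (r₁ : ℕ)
    (hreg : G.IsRegularOfDegree r₁) (hA : (G.adjMatrix ℝ).IsHermitian) (i : V) :
    0 ≤ hA.eigenvalues i + (r₁ : ℝ) := by
  have hpsd : (G.adjMatrix ℝ + (r₁ : ℝ) • 1).PosSemidef := by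
    have h1 : G.adjMatrix ℝ + (r₁ : ℝ) • 1 = incid G * (incid G)ᴴ := by
      rw [show (incid G)ᴴ = (incid G)ᵀ from by
        ext a b; simp [Matrix.conjTranspose_apply]]
      exact (aux_NNt G r₁ hreg).symm
    rw [h1]
    exact Matrix.posSemidef_self_mul_conjTranspose _
  set x : V → ℝ := ⇑(hA.eigenvectorBasis i) with hx
  have hmv : G.adjMatrix ℝ *ᵥ x = hA.eigenvalues i • x := hA.mulVec_eigenvectorBasis i
  have hxne : x ≠ 0 := by
    intro hc
    have := hA.eigenvectorBasis.orthonormal.ne_zero i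
    apply this
    ext j
    exact congrFun hc j
  have hq := hpsd.dotProduct_mulVec_nonneg x
  rw [Matrix.add_mulVec, hmv, Matrix.smul_mulVec, Matrix.one_mulVec] at hq
  have hsx : star x = x := by ext j; simp
  rw [hsx, ← add_smul, dotProduct_smul, smul_eq_mul] at hq
  have hxx : 0 < dotProduct x x := by
    have := Matrix.dotProduct_self_star_pos_iff.mpr hxne
    rwa [hsx] at this
  nlinarith

lemma aux_det_TL (G : SimpleGraph V) [DecidableRel G.Adj] (r₁ : ℕ)
    (hreg : G.IsRegularOfDegree r₁) (hA : (G.adjMatrix ℝ).IsHermitian) (k : ℕ) :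
    (Matrix.diagonal (fun _ : V => (X : ℝ[X]) ^ 2)
        - ((k : ℝ) • (G.adjMatrix ℝ + (r₁ : ℝ) • 1)).map C).det
      = ∏ i, ((X - C (Real.sqrt ((k : ℝ) * (hA.eigenvalues i + r₁))))
          * (X + C (Real.sqrt ((k : ℝ) * (hA.eigenvalues i + r₁))))) := by
  set U : Matrix V V ℝ := (hA.eigenvectorUnitary : Matrix V V ℝ) with hU
  have hUW : U * star U = 1 := (Matrix.mem_unitaryGroup_iff).mp hA.eigenvectorUnitary.2
  have hconj : (k : ℝ) • (G.adjMatrix ℝ + (r₁ : ℝ) • 1)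
      = U * ((k : ℝ) • (Matrix.diagonal hA.eigenvalues + (r₁ : ℝ) • 1)) * star U := by
    rw [Matrix.mul_smul, Matrix.smul_mul]
    congr 1
    rw [Matrix.mul_add, Matrix.add_mul, Matrix.mul_smul, Matrix.smul_mul, Matrix.mul_one, hUW]
    congr 1
    exact aux_spectral _ hA
  rw [hconj, aux_det_conj _ _ _ hUW]
  have hdiag : (k : ℝ) • (Matrix.diagonal hA.eigenvalues + (r₁ : ℝ) • 1)
      = Matrix.diagonal (fun i => (k : ℝ) * (hA.eigenvalues i + r₁)) := by
    ext i j
    by_cases h : i = j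
    · subst h; simp [Matrix.diagonal_apply, Matrix.one_apply, mul_add]
    · simp [Matrix.diagonal_apply, Matrix.one_apply, h]
  rw [hdiag,
    show ((Matrix.diagonal fun i => (k : ℝ) * (hA.eigenvalues i + r₁)).map (C : ℝ →+* ℝ[X]))
      = Matrix.diagonal (fun i => C ((k : ℝ) * (hA.eigenvalues i + r₁))) from
        Matrix.diagonal_map (by simp),
    Matrix.diagonal_sub, Matrix.det_diagonal]
  refine Finset.prod_congr rfl fun i _ => ?_
  have hnn : 0 ≤ (k : ℝ) * (hA.eigenvalues i + r₁) :=
    mul_nonneg (Nat.cast_nonneg k) (aux_eig_nonneg G r₁ hreg hA i)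
  have hsq : Real.sqrt ((k : ℝ) * (hA.eigenvalues i + r₁)) ^ 2
      = (k : ℝ) * (hA.eigenvalues i + r₁) := Real.sq_sqrt hnn
  rw [show ((X : ℝ[X]) - C (Real.sqrt ((k : ℝ) * (hA.eigenvalues i + r₁))))
        * (X + C (Real.sqrt ((k : ℝ) * (hA.eigenvalues i + r₁))))
      = X ^ 2 - C (Real.sqrt ((k : ℝ) * (hA.eigenvalues i + r₁)) ^ 2) from by
        rw [map_pow]; ring, hsq]

end Stmt2Aux

/-- if `G` is `r₁`-regular with adjacency eigenvalues `λ₁,…,λ_p`, then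
`ε(S(G)_k) = 2√k · Σᵢ √(λᵢ + r₁)`. -/
theorem stmt_2 (V : Type) [Fintype V] [DecidableEq V] (G : SimpleGraph V) [DecidableRel G.Adj]
    (r₁ : ℕ) (hreg : G.IsRegularOfDegree r₁) (k : ℕ) (hk : 0 < k)
    (hA : (G.adjMatrix ℝ).IsHermitian) :
    matEnergy (ASk G k) =
      2 * Real.sqrt (k : ℝ) * ∑ i, Real.sqrt (hA.eigenvalues i + (r₁ : ℝ)) := by
  classical
  set B : Matrix V (Fin k × G.edgeSet) ℝ := Matrix.of fun v ie => incid G v ie.2 with hBdef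
  have hASk : ASk G k = Matrix.fromBlocks 0 B Bᵀ 0 := by
    ext x y
    cases x with
    | inl v => cases y with
      | inl w => rfl
      | inr ie => rfl
    | inr ie => cases y with
      | inl w => rfl
      | inr je => rfl
  have hM : (ASk G k).IsHermitian := by
    rw [hASk]
    show _ᴴ = _
    ext x y
    cases x <;> cases y <;>
      simp [Matrix.conjTranspose_apply, Matrix.fromBlocks, Matrix.transpose_apply]
  set a : V → ℝ := fun i => Real.sqrt ((k : ℝ) * (hA.eigenvalues i + r₁)) with ha
  have hBBt : B * Bᵀ = (k : ℝ) • (G.adjMatrix ℝ + (r₁ : ℝ) • 1) := aux_BBt G r₁ hreg k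
  have hpoly : (∏ i, (X - C (hM.eigenvalues i))) * X ^ Fintype.card V
      = X ^ Fintype.card (Fin k × G.edgeSet)
          * ∏ i : V, ((X - C (a i)) * (X + C (a i))) := by
    rw [← aux_hermitian_charpoly _ hM]
    conv_lhs => rw [hASk]
    rw [aux_block B, hBBt, aux_det_TL G r₁ hreg hA k, mul_comm]
  have hmonL : (∏ i, (X - C (hM.eigenvalues i))).Monic :=
    monic_prod_of_monic _ _ fun i _ => monic_X_sub_C _
  have hmonR : (∏ i : V, ((X - C (a i)) * (X + C (a i)))).Monic :=
    monic_prod_of_monic _ _ fun i _ => (monic_X_sub_C _).mul (monic_X_add_C _)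
  have hroots := congrArg Polynomial.roots hpoly
  have hfac : ∀ i : V, ((X - C (a i)) * (X + C (a i))).roots = {a i} + {-(a i)} := by
    intro i
    have h1 : (X + C (a i) : ℝ[X]) = X - C (-(a i)) := by rw [map_neg, sub_neg_eq_add]
    rw [Polynomial.roots_mul (mul_ne_zero (Polynomial.X_sub_C_ne_zero _)
      (by rw [h1]; exact Polynomial.X_sub_C_ne_zero _)), Polynomial.roots_X_sub_C, h1,
      Polynomial.roots_X_sub_C]
  rw [Polynomial.roots_mul (mul_ne_zero hmonL.ne_zero (pow_ne_zero _ Polynomial.X_ne_zero)),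
    Polynomial.roots_mul (mul_ne_zero (pow_ne_zero _ Polynomial.X_ne_zero) hmonR.ne_zero),
    Polynomial.roots_prod _ _ hmonL.ne_zero, Polynomial.roots_prod _ _ hmonR.ne_zero,
    Polynomial.roots_pow, Polynomial.roots_pow, Polynomial.roots_X] at hroots
  simp only [Polynomial.roots_X_sub_C, Multiset.bind_singleton] at hroots
  have hbind : (Finset.univ.val.bind fun i => ((X - C (a i)) * (X + C (a i))).roots)
      = Finset.univ.val.bind (fun i => ({a i} + {-(a i)} : Multiset ℝ)) :=
    Multiset.bind_congr (fun i _ => hfac i)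
  rw [hbind] at hroots
  have habs := congrArg (fun s : Multiset ℝ => (s.map (fun t : ℝ => |t|)).sum) hroots
  simp only [Multiset.map_add, Multiset.sum_add, Multiset.map_nsmul, Multiset.map_singleton,
    abs_zero, Multiset.map_bind, Multiset.sum_bind, Multiset.map_map] at habs
  have hzero : ∀ n : ℕ, (n • ({(0:ℝ)} : Multiset ℝ)).sum = 0 := by
    intro n
    induction n with
    | zero => simp
    | succ m ih => rw [succ_nsmul, Multiset.sum_add, ih]; simp
  rw [hzero, hzero, zero_add, add_zero] at habs
  have hL : ((Finset.univ.val.map hM.eigenvalues).map (fun t : ℝ => |t|)).sum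
      = ∑ i, |hM.eigenvalues i| := by
    rw [Multiset.map_map, Finset.sum_eq_multiset_sum]
    rfl
  have hR : (Finset.univ.val.map
        (fun i => (({a i} + {-(a i)} : Multiset ℝ).map (fun t : ℝ => |t|)).sum)).sum
      = ∑ i : V, 2 * a i := by
    rw [Finset.sum_eq_multiset_sum]
    congr 1
    apply Multiset.map_congr rfl
    intro i _
    simp only [Multiset.map_add, Multiset.map_singleton, Multiset.sum_add,
      Multiset.sum_singleton, abs_neg]
    rw [abs_of_nonneg (Real.sqrt_nonneg _)]
    ring
  have energy_eq : matEnergy (ASk G k) = ∑ i, |hM.eigenvalues i| := by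
    rw [matEnergy, dif_pos hM]
  simp only [Multiset.sum_singleton, abs_neg] at habs
  rw [energy_eq,
    show (∑ i, |hM.eigenvalues i|)
      = (Multiset.map ((fun t : ℝ => |t|) ∘ hM.eigenvalues) Finset.univ.val).sum from rfl,
    habs,
    show (Multiset.map (fun x => |a x| + |a x|) Finset.univ.val).sum
      = ∑ x : V, (|a x| + |a x|) from rfl]
  have hfin : ∀ x : V, |a x| + |a x|
      = (2 * Real.sqrt (k : ℝ)) * Real.sqrt (hA.eigenvalues x + r₁) := by
    intro x
    rw [ha]
    simp only
    rw [abs_of_nonneg (Real.sqrt_nonneg _), Real.sqrt_mul (Nat.cast_nonneg k)]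
    ring
  rw [Finset.sum_congr rfl (fun x _ => hfin x), ← Finset.mul_sum]


end
end

section
/- Let G be a finite simple graph with no isolated vertices and let k be a positive integer. Then ε_R(S(G)_k) = ε_R(S(G)), where ε_R denotes Randić energy. -/
open Matrix

noncomputable section

section AuxEnergy
open Polynomial


lemma charpoly_of_conj {n : Type} [Fintype n] [DecidableEq n]
    (A B P P' : Matrix n n ℝ) (h : P * A = B * P) (h1 : P * P' = 1) (_h2 : P' * P = 1) :
    A.charpoly = B.charpoly := by
  have key : (C : ℝ →+* ℝ[X]).mapMatrix P * charmatrix A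
      = charmatrix B * (C : ℝ →+* ℝ[X]).mapMatrix P := by
    unfold charmatrix
    rw [Matrix.mul_sub, Matrix.sub_mul, ← _root_.map_mul, ← _root_.map_mul, h,
      (Matrix.scalar_commute X (Commute.all X) ((C : ℝ →+* ℝ[X]).mapMatrix P)).symm]
  have hdet : ((C : ℝ →+* ℝ[X]).mapMatrix P).det * A.charpoly
      = ((C : ℝ →+* ℝ[X]).mapMatrix P).det * B.charpoly := by
    rw [Matrix.charpoly, Matrix.charpoly, ← det_mul, key, det_mul, mul_comm]
  have hP : ((C : ℝ →+* ℝ[X]).mapMatrix P).det ≠ 0 := by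
    have hp : P.det * P'.det = 1 := by rw [← det_mul, h1, det_one]
    rw [← RingHom.map_det, Ne, Polynomial.C_eq_zero]
    exact left_ne_zero_of_mul_eq_one hp
  exact mul_left_cancel₀ hP hdet

lemma charpoly_diag {n : Type} [Fintype n] [DecidableEq n] (d : n → ℝ) :
    (Matrix.diagonal d).charpoly = ∏ i, (X - C (d i)) := by
  have : charmatrix (Matrix.diagonal d) = Matrix.diagonal (fun i => X - C (d i)) := by
    ext i j
    by_cases hij : i = j
    · subst hij; simp
    · simp [hij, charmatrix_apply_ne _ _ _ hij, Matrix.diagonal_apply_ne _ hij]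
  rw [Matrix.charpoly, this, det_diagonal]

lemma charpoly_hermitian {n : Type} [Fintype n] [DecidableEq n] {A : Matrix n n ℝ}
    (hA : A.IsHermitian) : A.charpoly = ∏ i, (X - C (hA.eigenvalues i)) := by
  have hspec := hA.spectral_theorem
  set U : Matrix n n ℝ := (Matrix.IsHermitian.eigenvectorUnitary hA : Matrix n n ℝ) with hU
  have h1 : U * star U = 1 := (Matrix.mem_unitaryGroup_iff).mp (Matrix.IsHermitian.eigenvectorUnitary hA).2
  have h2 : star U * U = 1 := (Matrix.mem_unitaryGroup_iff').mp (Matrix.IsHermitian.eigenvectorUnitary hA).2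
  have hD : Matrix.diagonal (RCLike.ofReal ∘ hA.eigenvalues) = Matrix.diagonal hA.eigenvalues := by
    congr 1
  have hconj : star U * A = Matrix.diagonal hA.eigenvalues * star U := by
    conv_lhs => rw [hspec]
    rw [hD, Unitary.conjStarAlgAut_apply, ← hU, ← Matrix.mul_assoc, ← Matrix.mul_assoc, h2, Matrix.one_mul]
  rw [charpoly_of_conj A (Matrix.diagonal hA.eigenvalues) (star U) U hconj h2 h1,
    charpoly_diag]

lemma prod_X_sub_C_roots {n : Type} [Fintype n] (f : n → ℝ) :
    (∏ i, (X - C (f i))).roots = (Finset.univ.val.map f) := by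
  rw [Finset.prod_eq_multiset_prod]
  have : Multiset.map (fun i => X - C (f i)) Finset.univ.val
      = Multiset.map (fun a => X - C a) (Finset.univ.val.map f) := by
    rw [Multiset.map_map]; rfl
  rw [this, Polynomial.roots_multiset_prod_X_sub_C]

lemma energy_of_charpoly_mul {n m : Type} [Fintype n] [DecidableEq n] [Fintype m] [DecidableEq m]
    (A : Matrix n n ℝ) (B : Matrix m m ℝ) (hA : A.IsHermitian) (hB : B.IsHermitian) (d : ℕ)
    (h : A.charpoly = B.charpoly * X ^ d) :
    (if hh : A.IsHermitian then ∑ i, |hh.eigenvalues i| else 0)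
      = (if hh : B.IsHermitian then ∑ i, |hh.eigenvalues i| else 0) := by
  rw [dif_pos hA, dif_pos hB]
  rw [charpoly_hermitian hA, charpoly_hermitian hB] at h
  have hroots := congrArg Polynomial.roots h
  have hBne : (∏ j, (X - C (hB.eigenvalues j))) ≠ 0 :=
    Finset.prod_ne_zero_iff.mpr fun j _ => X_sub_C_ne_zero _
  rw [Polynomial.roots_mul (mul_ne_zero hBne (pow_ne_zero _ X_ne_zero)),
    Polynomial.roots_X_pow, prod_X_sub_C_roots, prod_X_sub_C_roots,
    Multiset.nsmul_singleton] at hroots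
  have habs := congrArg (fun s : Multiset ℝ => (s.map (fun x => |x|)).sum) hroots
  simp only [Multiset.map_add, Multiset.sum_add, Multiset.map_replicate, abs_zero,
    Multiset.sum_replicate, smul_zero, add_zero, Multiset.map_map] at habs
  rw [Finset.sum_eq_multiset_sum, Finset.sum_eq_multiset_sum]
  exact habs


end AuxEnergy

section AuxGraph
open Polynomial

section GraphLemmas
variable {V : Type} (G : SimpleGraph V)

lemma SG_adj_inl_inr (v : V) (e : G.edgeSet) :
    (SGGraph G).Adj (Sum.inl v) (Sum.inr e) ↔ v ∈ (e : Sym2 V) := by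
  constructor
  · rintro (⟨w, f, h1, h2, h3⟩ | ⟨w, f, h1, h2, h3⟩) <;> simp_all
  · intro h; exact Or.inl ⟨v, e, rfl, rfl, h⟩

lemma SG_adj_inr_inl (v : V) (e : G.edgeSet) :
    (SGGraph G).Adj (Sum.inr e) (Sum.inl v) ↔ v ∈ (e : Sym2 V) := by
  constructor
  · rintro (⟨w, f, h1, h2, h3⟩ | ⟨w, f, h1, h2, h3⟩) <;> simp_all
  · intro h; exact Or.inr ⟨v, e, rfl, rfl, h⟩

lemma SG_not_adj_inl_inl (v w : V) : ¬ (SGGraph G).Adj (Sum.inl v) (Sum.inl w) := by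
  rintro (⟨a, f, h1, h2, h3⟩ | ⟨a, f, h1, h2, h3⟩) <;> simp_all

lemma SG_not_adj_inr_inr (e f : G.edgeSet) : ¬ (SGGraph G).Adj (Sum.inr e) (Sum.inr f) := by
  rintro (⟨a, g, h1, h2, h3⟩ | ⟨a, g, h1, h2, h3⟩) <;> simp_all

lemma SGk_adj_inl_inr (k : ℕ) (v : V) (ie : Fin k × G.edgeSet) :
    (SGkGraph G k).Adj (Sum.inl v) (Sum.inr ie) ↔ v ∈ (ie.2 : Sym2 V) := by
  constructor
  · rintro (⟨w, jf, h1, h2, h3⟩ | ⟨w, jf, h1, h2, h3⟩) <;> simp_all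
  · intro h; exact Or.inl ⟨v, ie, rfl, rfl, h⟩

lemma SGk_adj_inr_inl (k : ℕ) (v : V) (ie : Fin k × G.edgeSet) :
    (SGkGraph G k).Adj (Sum.inr ie) (Sum.inl v) ↔ v ∈ (ie.2 : Sym2 V) := by
  constructor
  · rintro (⟨w, jf, h1, h2, h3⟩ | ⟨w, jf, h1, h2, h3⟩) <;> simp_all
  · intro h; exact Or.inr ⟨v, ie, rfl, rfl, h⟩

lemma SGk_not_adj_inl_inl (k : ℕ) (v w : V) :
    ¬ (SGkGraph G k).Adj (Sum.inl v) (Sum.inl w) := by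
  rintro (⟨a, jf, h1, h2, h3⟩ | ⟨a, jf, h1, h2, h3⟩) <;> simp_all

lemma SGk_not_adj_inr_inr (k : ℕ) (ie jf : Fin k × G.edgeSet) :
    ¬ (SGkGraph G k).Adj (Sum.inr ie) (Sum.inr jf) := by
  rintro (⟨a, g, h1, h2, h3⟩ | ⟨a, g, h1, h2, h3⟩) <;> simp_all

lemma SG_nbr_inl (v : V) :
    (SGGraph G).neighborSet (Sum.inl v) = Sum.inr '' {e : G.edgeSet | v ∈ (e : Sym2 V)} := by
  ext x
  cases x with
  | inl w => simp [SimpleGraph.neighborSet, SG_not_adj_inl_inl]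
  | inr e => simp [SimpleGraph.neighborSet, SG_adj_inl_inr]

lemma SG_nbr_inr (e : G.edgeSet) :
    (SGGraph G).neighborSet (Sum.inr e) = Sum.inl '' {w : V | w ∈ (e : Sym2 V)} := by
  ext x
  cases x with
  | inl w => simp [SimpleGraph.neighborSet, SG_adj_inr_inl]
  | inr f => simp [SimpleGraph.neighborSet, SG_not_adj_inr_inr]

lemma SGk_nbr_inl (k : ℕ) (v : V) :
    (SGkGraph G k).neighborSet (Sum.inl v)
      = Sum.inr '' ((Set.univ : Set (Fin k)) ×ˢ {e : G.edgeSet | v ∈ (e : Sym2 V)}) := by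
  ext x
  cases x with
  | inl w => simp [SimpleGraph.neighborSet, SGk_not_adj_inl_inl]
  | inr ie => simp [SimpleGraph.neighborSet, SGk_adj_inl_inr, Set.mem_prod]

lemma SGk_nbr_inr (k : ℕ) (ie : Fin k × G.edgeSet) :
    (SGkGraph G k).neighborSet (Sum.inr ie) = Sum.inl '' {w : V | w ∈ (ie.2 : Sym2 V)} := by
  ext x
  cases x with
  | inl w => simp [SimpleGraph.neighborSet, SGk_adj_inr_inl]
  | inr jf => simp [SimpleGraph.neighborSet, SGk_not_adj_inr_inr]

lemma card_SGk_inl (k : ℕ) (v : V) :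
    Nat.card ((SGkGraph G k).neighborSet (Sum.inl v))
      = k * Nat.card ((SGGraph G).neighborSet (Sum.inl v)) := by
  rw [SGk_nbr_inl, SG_nbr_inl, Nat.card_image_of_injective Sum.inr_injective,
    Nat.card_image_of_injective Sum.inr_injective,
    Nat.card_congr (Equiv.Set.prod _ _), Nat.card_prod,
    Nat.card_congr (Equiv.Set.univ _), Nat.card_eq_fintype_card, Fintype.card_fin]

lemma card_SGk_inr (k : ℕ) (ie : Fin k × G.edgeSet) :
    Nat.card ((SGkGraph G k).neighborSet (Sum.inr ie))
      = Nat.card ((SGGraph G).neighborSet (Sum.inr ie.2)) := by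
  rw [SGk_nbr_inr, SG_nbr_inr, Nat.card_image_of_injective Sum.inl_injective,
    Nat.card_image_of_injective Sum.inl_injective]

lemma randic_symm {W : Type} (H : SimpleGraph W) (u v : W) :
    randicMatrix H u v = randicMatrix H v u := by
  unfold randicMatrix
  by_cases h : H.Adj u v
  · rw [if_pos h, if_pos h.symm, Nat.mul_comm]
  · rw [if_neg h, if_neg fun hh => h hh.symm]

lemma randic_isHermitian {W : Type} [Fintype W] (H : SimpleGraph W) :
    (randicMatrix H).IsHermitian := by
  ext i j
  simp [Matrix.conjTranspose_apply, randic_symm H j i]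

lemma randic_not_adj {W : Type} (H : SimpleGraph W) (u v : W) (h : ¬ H.Adj u v) :
    randicMatrix H u v = 0 := by
  unfold randicMatrix; rw [if_neg h]

lemma randic_scal {V : Type} (G : SimpleGraph V) (k : ℕ) (hk : 0 < k)
    (v : V) (ie : Fin k × G.edgeSet) :
    randicMatrix (SGkGraph G k) (Sum.inl v) (Sum.inr ie)
      = (Real.sqrt k)⁻¹ * randicMatrix (SGGraph G) (Sum.inl v) (Sum.inr ie.2) := by
  unfold randicMatrix
  by_cases h : v ∈ (ie.2 : Sym2 V)
  · rw [if_pos ((SGk_adj_inl_inr G k v ie).mpr h), if_pos ((SG_adj_inl_inr G v ie.2).mpr h),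
      card_SGk_inl, card_SGk_inr]
    rw [Nat.cast_mul, Nat.cast_mul, Nat.cast_mul]
    rw [mul_assoc, Real.sqrt_mul (Nat.cast_nonneg k)]
    rw [one_div, one_div, mul_inv]
  · rw [if_neg (fun hh => h ((SGk_adj_inl_inr G k v ie).mp hh)),
      if_neg (fun hh => h ((SG_adj_inl_inr G v ie.2).mp hh)), mul_zero]

end GraphLemmas

end AuxGraph

section AuxW
open Polynomial


def Wmat (k : ℕ) : Matrix (Fin (k+1)) (Fin (k+1)) ℝ :=
  fun i j => if j = 0 then (Real.sqrt (k+1))⁻¹ else ((if i = j then 1 else 0) - (if i = 0 then 1 else 0))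

def Wmat' (k : ℕ) : Matrix (Fin (k+1)) (Fin (k+1)) ℝ :=
  fun i j => if i = 0 then (Real.sqrt (k+1))⁻¹ else ((if i = j then 1 else 0) - (k+1 : ℝ)⁻¹)

lemma sqrt_inv_mul_self (k : ℕ) :
    (Real.sqrt (k+1))⁻¹ * (Real.sqrt (k+1))⁻¹ = (k+1 : ℝ)⁻¹ := by
  rw [← mul_inv, Real.mul_self_sqrt (by positivity)]

lemma Wmul (k : ℕ) : Wmat k * Wmat' k = 1 := by
  have hk0 : (k + 1 : ℝ) ≠ 0 := by positivity
  ext i j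
  rw [Matrix.mul_apply]
  by_cases hi : i = 0 <;> by_cases hj : j = 0
  · subst hi; subst hj
    have key : ∀ l : Fin (k+1), Wmat k 0 l * Wmat' k l 0 = (k+1 : ℝ)⁻¹ := by
      intro l
      by_cases hl : l = 0
      · subst hl; simp [Wmat, Wmat', sqrt_inv_mul_self k]
      · simp [Wmat, Wmat', hl, Ne.symm hl]
    rw [Finset.sum_congr rfl fun l _ => key l, Finset.sum_const, Finset.card_univ,
      Fintype.card_fin, nsmul_eq_mul, Matrix.one_apply_eq]
    push_cast
    rw [mul_inv_cancel₀ hk0]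
  · subst hi
    have key : ∀ l : Fin (k+1), Wmat k 0 l * Wmat' k l j
        = (k+1 : ℝ)⁻¹ - (if l = j then 1 else 0) := by
      intro l
      by_cases hl : l = 0
      · subst hl; simp [Wmat, Wmat', Ne.symm hj, sqrt_inv_mul_self k]
      · simp [Wmat, Wmat', hl, Ne.symm hl]
        try ring
    rw [Finset.sum_congr rfl fun l _ => key l, Finset.sum_sub_distrib, Finset.sum_const,
      Finset.card_univ, Fintype.card_fin, nsmul_eq_mul,
      Finset.sum_ite_eq' Finset.univ j (fun _ => (1:ℝ)), if_pos (Finset.mem_univ j),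
      Matrix.one_apply_ne (Ne.symm hj)]
    push_cast
    rw [mul_inv_cancel₀ hk0, sub_self]
  · subst hj
    have key : ∀ l : Fin (k+1), Wmat k i l * Wmat' k l 0
        = (if l = 0 then (k+1 : ℝ)⁻¹ else 0) + (if l = i then -(k+1:ℝ)⁻¹ else 0) := by
      intro l
      by_cases hl : l = 0
      · subst hl; simp [Wmat, Wmat', Ne.symm hi, sqrt_inv_mul_self k, hi]
      · by_cases hli : l = i
        · subst hli; simp [Wmat, Wmat', hl, hi]
        · simp [Wmat, Wmat', hl, hli, hi, Ne.symm hli]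
    rw [Finset.sum_congr rfl fun l _ => key l, Finset.sum_add_distrib,
      Finset.sum_ite_eq' Finset.univ (0 : Fin (k+1)) (fun _ => ((k+1:ℝ)⁻¹)),
      Finset.sum_ite_eq' Finset.univ i (fun _ => (-(k+1:ℝ)⁻¹)),
      if_pos (Finset.mem_univ _), if_pos (Finset.mem_univ _), add_neg_cancel,
      Matrix.one_apply_ne hi]
  · have key : ∀ l : Fin (k+1), Wmat k i l * Wmat' k l j
        = (if l = 0 then (k+1 : ℝ)⁻¹ else 0)
          + (if l = i then ((if i = j then 1 else 0) - (k+1:ℝ)⁻¹) else 0) := by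
      intro l
      by_cases hl : l = 0
      · subst hl; simp [Wmat, Wmat', Ne.symm hi, sqrt_inv_mul_self k, hi]
      · by_cases hli : l = i
        · subst hli; simp [Wmat, Wmat', hl, hi]
        · simp [Wmat, Wmat', hl, hli, hi, Ne.symm hli]
    rw [Finset.sum_congr rfl fun l _ => key l, Finset.sum_add_distrib,
      Finset.sum_ite_eq' Finset.univ (0 : Fin (k+1)) (fun _ => ((k+1:ℝ)⁻¹)),
      Finset.sum_ite_eq' Finset.univ i (fun _ => ((if i = j then (1:ℝ) else 0) - (k+1:ℝ)⁻¹)),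
      if_pos (Finset.mem_univ _), if_pos (Finset.mem_univ _)]
    rw [add_sub_cancel]
    rw [Matrix.one_apply]

lemma Wmul' (k : ℕ) : Wmat' k * Wmat k = 1 :=
  mul_eq_one_comm.mp (Wmul k)

lemma Wcolsum (k : ℕ) (j : Fin (k+1)) :
    ∑ i, Wmat k i j = if j = 0 then Real.sqrt (k+1) else 0 := by
  by_cases hj : j = 0
  · subst hj
    rw [if_pos rfl]
    have : ∀ i : Fin (k+1), Wmat k i 0 = (Real.sqrt (k+1))⁻¹ := fun i => by simp [Wmat]
    have hc : ((k+1 : ℕ) : ℝ) = Real.sqrt (k+1) * Real.sqrt (k+1) := by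
      rw [Real.mul_self_sqrt (by positivity)]; push_cast; ring
    rw [Finset.sum_congr rfl fun i _ => this i, Finset.sum_const, Finset.card_univ,
      Fintype.card_fin, nsmul_eq_mul, hc, mul_assoc,
      mul_inv_cancel₀ (by positivity : Real.sqrt ((k:ℝ)+1) ≠ 0), mul_one]
  · rw [if_neg hj]
    have : ∀ i : Fin (k+1), Wmat k i j = (if i = j then 1 else 0) - (if i = 0 then 1 else 0) := by
      intro i; simp [Wmat, hj]
    rw [Finset.sum_congr rfl fun i _ => this i, Finset.sum_sub_distrib,
      Finset.sum_ite_eq' Finset.univ j (fun _ => (1:ℝ)),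
      Finset.sum_ite_eq' Finset.univ (0 : Fin (k+1)) (fun _ => (1:ℝ)),
      if_pos (Finset.mem_univ _), if_pos (Finset.mem_univ _), sub_self]

lemma charpoly_zero_mat (m : Type) [Fintype m] [DecidableEq m] :
    (0 : Matrix m m ℝ).charpoly = X ^ Fintype.card m := by
  unfold Matrix.charpoly charmatrix
  rw [map_zero, sub_zero, Matrix.scalar_apply, Matrix.det_diagonal, Finset.prod_const,
    Finset.card_univ]


end AuxW

section AuxMain
open Polynomial
open scoped Kronecker

def splitEquiv (k : ℕ) (V E : Type) : (V ⊕ (Fin (k+1) × E)) ≃ ((V ⊕ E) ⊕ (Fin k × E)) where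
  toFun x := match x with
    | Sum.inl v => Sum.inl (Sum.inl v)
    | Sum.inr (i, e) => if h : i = 0 then Sum.inl (Sum.inr e) else Sum.inr (i.pred h, e)
  invFun y := match y with
    | Sum.inl (Sum.inl v) => Sum.inl v
    | Sum.inl (Sum.inr e) => Sum.inr (0, e)
    | Sum.inr (i, e) => Sum.inr (i.succ, e)
  left_inv := by
    rintro (v | ⟨i, e⟩)
    · rfl
    · by_cases h : i = 0
      · subst h; simp
      · simp [h]
  right_inv := by
    rintro ((v | e) | ⟨i, e⟩)
    · rfl
    · simp
    · simp [Fin.succ_ne_zero]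

variable {V : Type} [Fintype V] [DecidableEq V] (G : SimpleGraph V) [DecidableRel G.Adj]

def C0 : Matrix V G.edgeSet ℝ := fun v e => randicMatrix (SGGraph G) (Sum.inl v) (Sum.inr e)

def NcMat (k : ℕ) : Matrix V (Fin (k+1) × G.edgeSet) ℝ :=
  fun v ie => if ie.1 = 0 then C0 G v ie.2 else 0

def CkMat (k : ℕ) : Matrix V (Fin (k+1) × G.edgeSet) ℝ :=
  fun v ie => (Real.sqrt ((k : ℝ) + 1))⁻¹ * C0 G v ie.2

lemma blockSGk (k : ℕ) :
    randicMatrix (SGkGraph G (k+1)) = Matrix.fromBlocks 0 (CkMat G k) (CkMat G k)ᵀ 0 := by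
  have hcast : ((k + 1 : ℕ) : ℝ) = (k : ℝ) + 1 := by push_cast; ring
  ext x y
  cases x with
  | inl v =>
    cases y with
    | inl w =>
      rw [randic_not_adj _ _ _ (SGk_not_adj_inl_inl G (k+1) v w)]; rfl
    | inr ie =>
      have := randic_scal G (k+1) (Nat.succ_pos k) v ie
      rw [this]
      show _ = CkMat G k v ie
      rw [CkMat, ← hcast]
      rfl
  | inr ie =>
    cases y with
    | inl w =>
      rw [randic_symm, randic_scal G (k+1) (Nat.succ_pos k) w ie]
      show _ = (CkMat G k)ᵀ ie w
      rw [Matrix.transpose_apply, CkMat, ← hcast]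
      rfl
    | inr jf =>
      rw [randic_not_adj _ _ _ (SGk_not_adj_inr_inr G (k+1) ie jf)]; rfl

lemma blockSG :
    randicMatrix (SGGraph G) = Matrix.fromBlocks 0 (C0 G) (C0 G)ᵀ 0 := by
  ext x y
  cases x with
  | inl v =>
    cases y with
    | inl w => rw [randic_not_adj _ _ _ (SG_not_adj_inl_inl G v w)]; rfl
    | inr e => rfl
  | inr e =>
    cases y with
    | inl w =>
      rw [randic_symm]
      rfl
    | inr f => rw [randic_not_adj _ _ _ (SG_not_adj_inr_inr G e f)]; rfl

def Pmat (k : ℕ) : Matrix (V ⊕ (Fin (k+1) × G.edgeSet)) (V ⊕ (Fin (k+1) × G.edgeSet)) ℝ :=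
  Matrix.fromBlocks 1 0 0 (Wmat k ⊗ₖ (1 : Matrix G.edgeSet G.edgeSet ℝ))

def Pmat' (k : ℕ) : Matrix (V ⊕ (Fin (k+1) × G.edgeSet)) (V ⊕ (Fin (k+1) × G.edgeSet)) ℝ :=
  Matrix.fromBlocks 1 0 0 (Wmat' k ⊗ₖ (1 : Matrix G.edgeSet G.edgeSet ℝ))

def Nmat (k : ℕ) : Matrix (V ⊕ (Fin (k+1) × G.edgeSet)) (V ⊕ (Fin (k+1) × G.edgeSet)) ℝ :=
  Matrix.fromBlocks 0 (NcMat G k) (NcMat G k)ᵀ 0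

lemma PP' (k : ℕ) : Pmat G k * Pmat' G k = 1 := by
  rw [Pmat, Pmat', Matrix.fromBlocks_multiply, ← Matrix.mul_kronecker_mul, Wmul,
    Matrix.one_mul]
  simp [Matrix.fromBlocks_one, Matrix.one_kronecker_one]

lemma P'P (k : ℕ) : Pmat' G k * Pmat G k = 1 := by
  rw [Pmat, Pmat', Matrix.fromBlocks_multiply, ← Matrix.mul_kronecker_mul, Wmul',
    Matrix.one_mul]
  simp [Matrix.fromBlocks_one, Matrix.one_kronecker_one]

lemma CkQ (k : ℕ) :
    CkMat G k * (Wmat k ⊗ₖ (1 : Matrix G.edgeSet G.edgeSet ℝ)) = NcMat G k := by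
  have hs : Real.sqrt ((k : ℝ) + 1) ≠ 0 := by positivity
  ext v jf
  obtain ⟨j, f⟩ := jf
  rw [Matrix.mul_apply]
  rw [Fintype.sum_prod_type]
  have inner : ∀ l : Fin (k+1),
      (∑ g : G.edgeSet, CkMat G k v (l, g)
        * (Wmat k ⊗ₖ (1 : Matrix G.edgeSet G.edgeSet ℝ)) (l, g) (j, f))
      = Wmat k l j * ((Real.sqrt ((k : ℝ) + 1))⁻¹ * C0 G v f) := by
    intro l
    have : ∀ g : G.edgeSet,
        CkMat G k v (l, g) * (Wmat k ⊗ₖ (1 : Matrix G.edgeSet G.edgeSet ℝ)) (l, g) (j, f)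
        = if g = f then Wmat k l j * ((Real.sqrt ((k : ℝ) + 1))⁻¹ * C0 G v g) else 0 := by
      intro g
      rw [Matrix.kroneckerMap_apply, CkMat]
      by_cases hg : g = f
      · rw [if_pos hg, hg, Matrix.one_apply_eq]; ring
      · rw [if_neg hg, Matrix.one_apply_ne hg, mul_zero, mul_zero]
    rw [Finset.sum_congr rfl fun g _ => this g, Finset.sum_ite_eq' Finset.univ f,
      if_pos (Finset.mem_univ f)]
  rw [Finset.sum_congr rfl fun l _ => inner l, ← Finset.sum_mul, Wcolsum]
  by_cases hj : j = 0
  · rw [if_pos hj, ← mul_assoc, mul_inv_cancel₀ hs, one_mul, NcMat]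
    simp [hj, C0]
  · rw [if_neg hj, zero_mul, NcMat]
    simp [hj]

lemma QNcT (k : ℕ) :
    (Wmat k ⊗ₖ (1 : Matrix G.edgeSet G.edgeSet ℝ)) * (NcMat G k)ᵀ = (CkMat G k)ᵀ := by
  ext ie v
  obtain ⟨i, e⟩ := ie
  rw [Matrix.mul_apply, Fintype.sum_prod_type]
  have inner : ∀ j : Fin (k+1),
      (∑ f : G.edgeSet, (Wmat k ⊗ₖ (1 : Matrix G.edgeSet G.edgeSet ℝ)) (i, e) (j, f)
        * (NcMat G k)ᵀ (j, f) v)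
      = if j = 0 then Wmat k i j * C0 G v e else 0 := by
    intro j
    have : ∀ f : G.edgeSet,
        (Wmat k ⊗ₖ (1 : Matrix G.edgeSet G.edgeSet ℝ)) (i, e) (j, f) * (NcMat G k)ᵀ (j, f) v
        = if f = e then (if j = 0 then Wmat k i j * C0 G v e else 0) else 0 := by
      intro f
      rw [Matrix.kroneckerMap_apply, Matrix.transpose_apply, NcMat]
      by_cases hf : f = e
      · subst hf
        rw [if_pos rfl, Matrix.one_apply_eq, mul_one]
        by_cases hj : j = 0
        · rw [if_pos hj, if_pos hj]
        · rw [if_neg hj, if_neg hj, mul_zero]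
      · rw [if_neg hf, Matrix.one_apply_ne fun h => hf h.symm, mul_zero, zero_mul]
    rw [Finset.sum_congr rfl fun f _ => this f, Finset.sum_ite_eq' Finset.univ e,
      if_pos (Finset.mem_univ e)]
  rw [Finset.sum_congr rfl fun j _ => inner j, Finset.sum_ite_eq' Finset.univ (0 : Fin (k+1)),
    if_pos (Finset.mem_univ _)]
  show Wmat k i 0 * C0 G v e = (CkMat G k)ᵀ (i, e) v
  rw [Matrix.transpose_apply, CkMat]
  simp [Wmat]

lemma conjMain (k : ℕ) :
    Pmat G k * Nmat G k = randicMatrix (SGkGraph G (k+1)) * Pmat G k := by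
  rw [blockSGk, Pmat, Nmat, Matrix.fromBlocks_multiply, Matrix.fromBlocks_multiply,
    QNcT, CkQ]
  simp

lemma reindexN (k : ℕ) :
    Matrix.reindex (splitEquiv k V G.edgeSet) (splitEquiv k V G.edgeSet) (Nmat G k)
      = Matrix.fromBlocks (randicMatrix (SGGraph G)) 0 0 0 := by
  ext x y
  rw [Matrix.reindex_apply, Matrix.submatrix_apply]
  rcases x with (v | e) | ⟨i, e⟩ <;> rcases y with (w | f) | ⟨j, f⟩ <;>
    simp only [splitEquiv, Equiv.coe_fn_symm_mk, Nmat, NcMat, Matrix.fromBlocks,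
      Matrix.transpose_apply, Sum.elim_inl, Sum.elim_inr, Matrix.of_apply,
      Matrix.zero_apply, Fin.succ_ne_zero, if_pos rfl, if_false, if_true, C0]
  all_goals first
    | rfl
    | exact (randic_not_adj _ _ _ (SG_not_adj_inl_inl G _ _)).symm
    | exact (randic_not_adj _ _ _ (SG_not_adj_inr_inr G _ _)).symm
    | exact randic_symm _ _ _
    | exact (randic_symm _ _ _).symm

lemma charpoly_SGk (k : ℕ) :
    (randicMatrix (SGkGraph G (k+1))).charpoly
      = (randicMatrix (SGGraph G)).charpoly * X ^ (Fintype.card (Fin k × G.edgeSet)) := by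
  have h1 : (Nmat G k).charpoly = (randicMatrix (SGkGraph G (k+1))).charpoly :=
    charpoly_of_conj _ _ (Pmat G k) (Pmat' G k) (conjMain G k) (PP' G k) (P'P G k)
  rw [← h1, ← Matrix.charpoly_reindex (splitEquiv k V G.edgeSet) (Nmat G k), reindexN,
    Matrix.charpoly_fromBlocks_zero₂₁, charpoly_zero_mat]

end AuxMain

/-- `ε_R(S(G)_k) = ε_R(S(G))`. -/
theorem stmt_5 (V : Type) [Fintype V] [DecidableEq V] (G : SimpleGraph V) [DecidableRel G.Adj]
    (hiso : NoIsolated G) (k : ℕ) (hk : 0 < k) :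
    matEnergy (randicMatrix (SGkGraph G k)) = matEnergy (randicMatrix (SGGraph G)) := by
  obtain ⟨k', rfl⟩ : ∃ k', k = k' + 1 := ⟨k - 1, by omega⟩
  unfold matEnergy
  exact energy_of_charpoly_mul _ _ (randic_isHermitian _) (randic_isHermitian _) _
    (charpoly_SGk G k')

end
end

section
/- Let m > 3 be an odd integer and let G be a nonsingular finite simple graph satisfying the property (SR). Then F_1^m(G) is nonsingular and satisfies the property (-R): for every eigenvalue μ of the adjacency matrix of F_1^m(G), the number −1/μ is also an eigenvalue of the adjacency matrix of F_1^m(G). -/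
open Matrix

noncomputable section

section MyHelpers
open scoped Kronecker

/-! ### Generic eigenvalue machinery -/

lemma my_eigMult_pos_iff {n : Type} [Fintype n] [DecidableEq n] (M : Matrix n n ℝ) (μ : ℝ) :
    0 < eigMult M μ ↔ ∃ v : n → ℝ, v ≠ 0 ∧ M *ᵥ v = μ • v := by
  unfold eigMult
  rw [Module.finrank_pos_iff (R := ℝ)]
  constructor
  · intro h
    obtain ⟨⟨v, hv⟩, hne⟩ := exists_ne (0 : LinearMap.ker (Matrix.toLin' (M - μ • (1 : Matrix n n ℝ))))
    refine ⟨v, ?_, ?_⟩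
    · intro h0
      exact hne (Subtype.ext h0)
    · have hv' : M *ᵥ v - μ • v = 0 := by simpa [Matrix.toLin'_apply] using hv
      exact sub_eq_zero.mp hv'
  · rintro ⟨v, hv, hMv⟩
    refine nontrivial_of_ne ⟨v, by simp [LinearMap.mem_ker, Matrix.toLin'_apply,
      Matrix.sub_mulVec, Matrix.smul_mulVec, Matrix.one_mulVec, hMv]⟩ 0 ?_
    intro h
    exact hv (by simpa using congrArg Subtype.val h)

lemma my_eig_iff_det {n : Type} [Fintype n] [DecidableEq n] (M : Matrix n n ℝ) (μ : ℝ) :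
    (∃ v : n → ℝ, v ≠ 0 ∧ M *ᵥ v = μ • v) ↔ (M - μ • (1 : Matrix n n ℝ)).det = 0 := by
  rw [← Matrix.exists_mulVec_eq_zero_iff]
  constructor
  · rintro ⟨v, hv, h⟩
    exact ⟨v, hv, by rw [Matrix.sub_mulVec, Matrix.smul_mulVec, Matrix.one_mulVec, h, sub_self]⟩
  · rintro ⟨v, hv, h⟩
    refine ⟨v, hv, ?_⟩
    rwa [Matrix.sub_mulVec, Matrix.smul_mulVec, Matrix.one_mulVec, sub_eq_zero] at h

lemma my_eigMult_pos_iff_det {n : Type} [Fintype n] [DecidableEq n] (M : Matrix n n ℝ) (μ : ℝ) :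
    0 < eigMult M μ ↔ (M - μ • (1 : Matrix n n ℝ)).det = 0 := by
  rw [my_eigMult_pos_iff, my_eig_iff_det]

lemma my_smul_one_diag {n : Type} [Fintype n] [DecidableEq n] (μ : ℝ) :
    μ • (1 : Matrix n n ℝ) = Matrix.diagonal (fun _ => μ) := by
  ext i j
  rcases eq_or_ne i j with rfl | h
  · simp
  · simp [Matrix.one_apply_ne h, Matrix.diagonal_apply_ne _ h]

lemma my_det_sub_smul {n : Type} [Fintype n] [DecidableEq n] {M : Matrix n n ℝ}
    (hM : M.IsHermitian) (μ : ℝ) :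
    (M - μ • (1 : Matrix n n ℝ)).det = ∏ i, (hM.eigenvalues i - μ) := by
  have hs : M = (hM.eigenvectorUnitary : Matrix n n ℝ) * Matrix.diagonal hM.eigenvalues *
      (star (hM.eigenvectorUnitary : Matrix n n ℝ)) := by
    simpa [RCLike.ofReal_real_eq_id] using hM.spectral_theorem
  set U := (hM.eigenvectorUnitary : Matrix n n ℝ) with hUdef
  have hU : U * star U = 1 := Matrix.mem_unitaryGroup_iff.mp hM.eigenvectorUnitary.2
  have key : M - μ • (1 : Matrix n n ℝ) =
      U * (Matrix.diagonal (fun i => hM.eigenvalues i - μ)) * star U := by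
    have h1 : U * (μ • (1 : Matrix n n ℝ)) * star U = μ • (1 : Matrix n n ℝ) := by
      rw [Matrix.mul_smul, Matrix.smul_mul, mul_one, hU]
    calc M - μ • (1 : Matrix n n ℝ)
        = U * Matrix.diagonal hM.eigenvalues * star U - U * (μ • (1 : Matrix n n ℝ)) * star U := by
          rw [← hs, h1]
      _ = U * (Matrix.diagonal hM.eigenvalues - μ • (1 : Matrix n n ℝ)) * star U := by
          rw [Matrix.mul_sub, Matrix.sub_mul]
      _ = _ := by rw [my_smul_one_diag, Matrix.diagonal_sub]
  rw [key, Matrix.det_mul_right_comm, hU, one_mul, Matrix.det_diagonal]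

lemma my_kron_det_sub {m' n : Type} [Fintype m'] [DecidableEq m'] [Fintype n] [DecidableEq n]
    {B : Matrix m' m' ℝ} {A : Matrix n n ℝ} (hB : B.IsHermitian) (hA : A.IsHermitian) (μ : ℝ) :
    (B ⊗ₖ A - μ • (1 : Matrix (m' × n) (m' × n) ℝ)).det =
      ∏ p : m' × n, (hB.eigenvalues p.1 * hA.eigenvalues p.2 - μ) := by
  have hsB : B = (hB.eigenvectorUnitary : Matrix m' m' ℝ) * Matrix.diagonal hB.eigenvalues *
      (star (hB.eigenvectorUnitary : Matrix m' m' ℝ)) := by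
    simpa [RCLike.ofReal_real_eq_id] using hB.spectral_theorem
  have hsA : A = (hA.eigenvectorUnitary : Matrix n n ℝ) * Matrix.diagonal hA.eigenvalues *
      (star (hA.eigenvectorUnitary : Matrix n n ℝ)) := by
    simpa [RCLike.ofReal_real_eq_id] using hA.spectral_theorem
  set U := (hB.eigenvectorUnitary : Matrix m' m' ℝ) with hUdef
  set W := (hA.eigenvectorUnitary : Matrix n n ℝ) with hWdef
  have hU : U * star U = 1 := Matrix.mem_unitaryGroup_iff.mp hB.eigenvectorUnitary.2
  have hW : W * star W = 1 := Matrix.mem_unitaryGroup_iff.mp hA.eigenvectorUnitary.2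
  have hunit : (U ⊗ₖ W) * (star U ⊗ₖ star W) = 1 := by
    rw [← Matrix.mul_kronecker_mul, hU, hW, Matrix.one_kronecker_one]
  have hkron : B ⊗ₖ A = (U ⊗ₖ W) *
      ((Matrix.diagonal hB.eigenvalues) ⊗ₖ (Matrix.diagonal hA.eigenvalues)) *
      (star U ⊗ₖ star W) := by
    conv_lhs => rw [hsB, hsA]
    rw [Matrix.mul_kronecker_mul, Matrix.mul_kronecker_mul]
  have key : B ⊗ₖ A - μ • (1 : Matrix (m' × n) (m' × n) ℝ) =
      (U ⊗ₖ W) * (Matrix.diagonal (fun p : m' × n => hB.eigenvalues p.1 * hA.eigenvalues p.2)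
        - μ • (1 : Matrix (m' × n) (m' × n) ℝ)) * (star U ⊗ₖ star W) := by
    rw [Matrix.mul_sub, Matrix.sub_mul, ← Matrix.diagonal_kronecker_diagonal, ← hkron]
    congr 1
    rw [Matrix.mul_smul, Matrix.smul_mul, mul_one, hunit]
  rw [key, Matrix.det_mul_right_comm, hunit, one_mul, my_smul_one_diag, Matrix.diagonal_sub,
    Matrix.det_diagonal]

/-! ### Analysis of `Bmat` -/

/-- The partner index: `cc 0 = 0`, `cc i = m-1-i` otherwise. -/
def ccB (m : ℕ) (i : Fin m) : Fin m :=
  if i.val = 0 then i else ⟨m - 1 - i.val, by have := i.isLt; omega⟩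

lemma ccB_val (m : ℕ) (i : Fin m) :
    (ccB m i).val = if i.val = 0 then 0 else m - 1 - i.val := by
  unfold ccB
  split_ifs with h <;> simp [h]

lemma ccB_ne_last (m : ℕ) (hm : 3 < m) (i : Fin m) (hi : i.val ≠ m - 1) :
    (ccB m i).val ≠ m - 1 := by
  have hlt := i.isLt
  rw [ccB_val]
  split_ifs with h <;> omega

lemma ccB_ccB (m : ℕ) (i : Fin m) (hi : i.val ≠ m - 1) :
    ccB m (ccB m i) = i := by
  have hlt := i.isLt
  apply Fin.ext
  rw [ccB_val, ccB_val]
  split_ifs <;> omega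

lemma Bmat_entry (m : ℕ) (hm : 3 < m) (i j : Fin m) :
    Bmat m i j = if j = ccB m i ∧ i.val ≠ m - 1 then 0 else 1 := by
  have hi := i.isLt
  have hj := j.isLt
  have hcc : (j = ccB m i) ↔ j.val = (if i.val = 0 then 0 else m - 1 - i.val) := by
    rw [Fin.ext_iff, ccB_val]
  rw [Bmat]
  by_cases hP : (i.val = 0 ∧ j.val = 0) ∨ (i.val ≠ 0 ∧ j.val ≠ 0 ∧ i.val + j.val = m - 1)
  · rw [if_pos hP, if_pos]
    refine ⟨?_, by omega⟩
    rw [hcc]; split_ifs with h <;> omega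
  · rw [if_neg hP, if_neg]
    rintro ⟨h1, h2⟩
    rw [hcc] at h1
    apply hP
    by_cases h : i.val = 0
    · rw [if_pos h] at h1; left; omega
    · rw [if_neg h] at h1; right; omega

lemma Bmat_mulVec (m : ℕ) (hm : 3 < m) (v : Fin m → ℝ) (i : Fin m) :
    (Bmat m *ᵥ v) i = (∑ k, v k) - (if i.val = m - 1 then 0 else v (ccB m i)) := by
  simp only [Matrix.mulVec, dotProduct]
  calc ∑ k, Bmat m i k * v k
      = ∑ k, (v k - if k = ccB m i ∧ i.val ≠ m - 1 then v k else 0) := by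
        refine Finset.sum_congr rfl fun k _ => ?_
        rw [Bmat_entry m hm]
        split_ifs <;> ring
    _ = (∑ k, v k) - ∑ k, (if k = ccB m i ∧ i.val ≠ m - 1 then v k else 0) :=
        Finset.sum_sub_distrib _ _
    _ = _ := by
        congr 1
        by_cases h : i.val = m - 1
        · simp [h]
        · simp only [h, ne_eq, not_false_iff, and_true, if_neg h]
          rw [Finset.sum_ite_eq' Finset.univ (ccB m i) v]
          simp

/-- Every eigenvalue of `Bmat m` is `1`, `-1`, or a root of `x² - (m-1)x - 1`. -/
lemma Bmat_eig_mem (m : ℕ) (hm : 3 < m) {β : ℝ} {v : Fin m → ℝ}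
    (hv : v ≠ 0) (heig : Bmat m *ᵥ v = β • v) :
    β = 1 ∨ β = -1 ∨ β ^ 2 - (m - 1 : ℝ) * β - 1 = 0 := by
  by_contra hc
  push_neg at hc
  obtain ⟨h1, h2, h3⟩ := hc
  set s : ℝ := ∑ k, v k with hs
  set last : Fin m := ⟨m - 1, by omega⟩ with hlastdef
  have he : ∀ i : Fin m, s - (if i.val = m - 1 then 0 else v (ccB m i)) = β * v i := by
    intro i
    rw [← Bmat_mulVec m hm, heig]
    simp
  have hmid : ∀ i : Fin m, i.val ≠ m - 1 → (β + 1) * v i = s := by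
    intro i hi
    have e1 : s - v (ccB m i) = β * v i := by
      have := he i; rwa [if_neg hi] at this
    have hcc := ccB_ne_last m hm i hi
    have e2 : s - v i = β * v (ccB m i) := by
      have := he (ccB m i)
      rwa [if_neg hcc, ccB_ccB m i hi] at this
    have h4 : (β - 1) * (v i - v (ccB m i)) = 0 := by linear_combination e2 - e1
    have h5 : β - 1 ≠ 0 := sub_ne_zero.mpr h1
    have e3 : v i = v (ccB m i) := by
      have := (mul_eq_zero.mp h4).resolve_left h5
      linarith
    linear_combination e3 - e1
  have hlast : β * v last = s := by
    have := he last
    rw [if_pos rfl] at this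
    linarith
  have hsum : (β + 1) * (s - v last) = (m - 1 : ℝ) * s := by
    have hcong : ∑ k ∈ Finset.univ.erase last, ((β + 1) * v k) =
        ∑ k ∈ Finset.univ.erase last, s := by
      refine Finset.sum_congr rfl fun k hk => ?_
      refine hmid k ?_
      have := Finset.ne_of_mem_erase hk
      intro hval
      exact this (Fin.ext hval)
    rw [Finset.sum_const, Finset.card_erase_of_mem (Finset.mem_univ _), Finset.card_univ,
      Fintype.card_fin, ← Finset.mul_sum, Finset.sum_erase_eq_sub (Finset.mem_univ last)] at hcong
    rw [hcong, nsmul_eq_mul, Nat.cast_sub (by omega), Nat.cast_one]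
  have hs0 : s = 0 := by
    by_contra hsne
    apply h3
    have key : s * (β ^ 2 - (m - 1 : ℝ) * β - 1) = 0 := by
      linear_combination β * hsum + (β + 1) * hlast
    exact (mul_eq_zero.mp key).resolve_left hsne
  have hb1 : β + 1 ≠ 0 := fun h => h2 (by linarith)
  have hz : ∀ i : Fin m, i.val ≠ m - 1 → v i = 0 := by
    intro i hi
    have := hmid i hi
    rw [hs0] at this
    exact (mul_eq_zero.mp this).resolve_left hb1
  apply hv
  funext i
  by_cases hi : i.val = m - 1
  · have hilast : i = last := Fin.ext hi
    have hsplit : ∑ k ∈ Finset.univ.erase last, v k = s - v last :=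
      Finset.sum_erase_eq_sub (Finset.mem_univ last)
    have hzero : ∑ k ∈ Finset.univ.erase last, v k = 0 := by
      refine Finset.sum_eq_zero fun k hk => ?_
      refine hz k ?_
      have := Finset.ne_of_mem_erase hk
      intro hval
      exact this (Fin.ext hval)
    rw [hilast]
    show v last = 0
    rw [hzero] at hsplit
    rw [hs0] at hsplit
    simpa using hsplit.symm
  · exact hz i hi

lemma Bmat_quad_eigvec (m : ℕ) (hm : 3 < m) {γ : ℝ}
    (hγq : γ ^ 2 - (m - 1 : ℝ) * γ - 1 = 0) :
    ∃ w : Fin m → ℝ, w ≠ 0 ∧ Bmat m *ᵥ w = γ • w := by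
  set last : Fin m := ⟨m - 1, by omega⟩ with hlastdef
  have hlv : last.val = m - 1 := rfl
  set w : Fin m → ℝ := fun k => if k.val = m - 1 then γ - (m - 2 : ℝ) else 1 with hwdef
  have hwlast : w last = γ - (m - 2 : ℝ) := by simp only [hwdef]; rw [if_pos hlv]
  have hwother : ∀ x : Fin m, x.val ≠ m - 1 → w x = 1 := by
    intro x h1
    simp only [hwdef]; rw [if_neg h1]
  have hsumw : ∑ k, w k = γ + 1 := by
    have hw' : ∀ k : Fin m, w k = (if k = last then γ - (m - 1 : ℝ) else 0) + 1 := by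
      intro k
      by_cases hk : k.val = m - 1
      · have hkl : k = last := Fin.ext (by rw [hk, hlv])
        rw [hkl, hwlast, if_pos rfl]
        have : ((m : ℝ) - 2) = ((m : ℝ) - 1) - 1 := by ring
        rw [this]; ring
      · rw [hwother k hk, if_neg (fun h => hk (by rw [h, hlv]))]
        ring
    rw [Finset.sum_congr rfl fun k _ => hw' k, Finset.sum_add_distrib,
      Finset.sum_ite_eq' Finset.univ last (fun _ => γ - (m - 1 : ℝ)),
      Finset.sum_const, Finset.card_univ, Fintype.card_fin, if_pos (Finset.mem_univ last),
      nsmul_eq_mul, mul_one]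
    ring
  refine ⟨w, ?_, ?_⟩
  · intro h0
    have := congrFun h0 (⟨0, by omega⟩ : Fin m)
    rw [hwother _ (by simp; omega), Pi.zero_apply] at this
    norm_num at this
  · funext i
    have hival := i.isLt
    rw [Bmat_mulVec m hm, hsumw, Pi.smul_apply, smul_eq_mul]
    by_cases hi : i.val = m - 1
    · have h2 : i = last := Fin.ext (by rw [hi, hlv])
      rw [if_pos hi, h2, hwlast, sub_zero]
      linear_combination -hγq
    · rw [if_neg hi, hwother (ccB m i) (ccB_ne_last m hm i hi), hwother i hi]
      ring

/-- For each eigenvalue `β` of `Bmat m`, `β ≠ 0` and `-(1/β)` is again an eigenvalue. -/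
lemma Bmat_neg_inv_eig (m : ℕ) (hm : 3 < m) {β : ℝ}
    (hβ : β = 1 ∨ β = -1 ∨ β ^ 2 - (m - 1 : ℝ) * β - 1 = 0) :
    β ≠ 0 ∧ ∃ w : Fin m → ℝ, w ≠ 0 ∧ Bmat m *ᵥ w = (-(1 / β)) • w := by
  set a : Fin m := ⟨1, by omega⟩ with hadef
  set b : Fin m := ⟨m - 2, by omega⟩ with hbdef
  set z : Fin m := ⟨0, by omega⟩ with hzdef
  have hav : a.val = 1 := rfl
  have hbv : b.val = m - 2 := rfl
  have hzv : z.val = 0 := rfl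
  rcases hβ with hβ | hβ | hβ
  · -- β = 1, eigenvector for -1
    subst hβ
    refine ⟨one_ne_zero, ?_⟩
    set w : Fin m → ℝ := fun k => if k.val = 0 then -2 else if k.val = 1 then 1 else
      if k.val = m - 2 then 1 else 0 with hwdef
    have hwz : w z = -2 := by
      simp only [hwdef, hzv]; split_ifs <;> first | rfl | (exfalso; omega) | (exfalso; simp_all) | norm_num
    have hwa : w a = 1 := by
      simp only [hwdef, hav]; split_ifs <;> first | rfl | (exfalso; omega) | (exfalso; simp_all) | norm_num
    have hwb : w b = 1 := by
      simp only [hwdef, hbv]; split_ifs <;> first | rfl | (exfalso; omega) | (exfalso; simp_all) | norm_num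
    have hwother : ∀ x : Fin m, x.val ≠ 0 → x.val ≠ 1 → x.val ≠ m - 2 → w x = 0 := by
      intro x h1 h2 h3
      simp only [hwdef]; rw [if_neg h1, if_neg h2, if_neg h3]
    have hsumw : ∑ k, w k = 0 := by
      rw [← Finset.sum_subset (Finset.subset_univ ({z, a, b} : Finset (Fin m)))
        (fun x _ hx => ?_)]
      · rw [Finset.sum_insert (by
            simp only [Finset.mem_insert, Finset.mem_singleton, not_or, Fin.ext_iff, hzv, hav, hbv]
            omega),
          Finset.sum_pair (by rw [Ne, Fin.ext_iff, hav, hbv]; omega)]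
        rw [hwz, hwa, hwb]; norm_num
      · simp only [Finset.mem_insert, Finset.mem_singleton, not_or, Fin.ext_iff, hzv, hav, hbv] at hx
        exact hwother x hx.1 hx.2.1 hx.2.2
    refine ⟨w, fun h0 => by simpa [hwz] using congrFun h0 z, ?_⟩
    funext i
    have hival := i.isLt
    rw [Bmat_mulVec m hm, hsumw, Pi.smul_apply, smul_eq_mul]
    have hccv := ccB_val m i
    by_cases hi : i.val = m - 1
    · rw [if_pos hi, hwother i (by omega) (by omega) (by omega)]
      norm_num
    · rw [if_neg hi]
      by_cases h0 : i.val = 0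
      · have h1 : ccB m i = z := Fin.ext (by rw [hccv, if_pos h0, hzv])
        have h2 : i = z := Fin.ext (by rw [h0, hzv])
        rw [h1, h2, hwz]; norm_num
      · have hcv' : (ccB m i).val = m - 1 - i.val := by rw [hccv, if_neg h0]
        by_cases ha : i.val = 1
        · have h1 : ccB m i = b := Fin.ext (by rw [hcv', hbv]; omega)
          have h2 : i = a := Fin.ext (by rw [ha, hav])
          rw [h1, h2, hwa, hwb]; norm_num
        · by_cases hb : i.val = m - 2
          · have h1 : ccB m i = a := Fin.ext (by rw [hcv', hav]; omega)
            have h2 : i = b := Fin.ext (by rw [hb, hbv])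
            rw [h1, h2, hwa, hwb]; norm_num
          · rw [hwother (ccB m i) (by rw [hcv']; omega) (by rw [hcv']; omega)
              (by rw [hcv']; omega), hwother i h0 ha hb]
            norm_num
  · -- β = -1, eigenvector for 1
    subst hβ
    refine ⟨by norm_num, ?_⟩
    set w : Fin m → ℝ := fun k => if k.val = 1 then 1 else if k.val = m - 2 then -1 else 0
      with hwdef
    have hwa : w a = 1 := by
      simp only [hwdef, hav]; split_ifs <;> first | rfl | (exfalso; omega) | (exfalso; simp_all) | norm_num
    have hwb : w b = -1 := by
      simp only [hwdef, hbv]; split_ifs <;> first | rfl | (exfalso; omega) | (exfalso; simp_all) | norm_num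
    have hwother : ∀ x : Fin m, x.val ≠ 1 → x.val ≠ m - 2 → w x = 0 := by
      intro x h1 h2
      simp only [hwdef]; rw [if_neg h1, if_neg h2]
    have hsumw : ∑ k, w k = 0 := by
      rw [← Finset.sum_subset (Finset.subset_univ ({a, b} : Finset (Fin m)))
        (fun x _ hx => ?_)]
      · rw [Finset.sum_pair (by rw [Ne, Fin.ext_iff, hav, hbv]; omega), hwa, hwb]
        norm_num
      · simp only [Finset.mem_insert, Finset.mem_singleton, not_or, Fin.ext_iff, hav, hbv] at hx
        exact hwother x hx.1 hx.2
    refine ⟨w, fun h0 => by simpa [hwa] using congrFun h0 a, ?_⟩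
    funext i
    have hival := i.isLt
    rw [Bmat_mulVec m hm, hsumw, Pi.smul_apply, smul_eq_mul]
    have hccv := ccB_val m i
    have hsc : -(1 / (-1 : ℝ)) = 1 := by norm_num
    rw [hsc, one_mul]
    by_cases hi : i.val = m - 1
    · rw [if_pos hi, hwother i (by omega) (by omega)]
      norm_num
    · rw [if_neg hi]
      by_cases h0 : i.val = 0
      · have h1 : (ccB m i).val = 0 := by rw [hccv, if_pos h0]
        rw [hwother (ccB m i) (by omega) (by omega), hwother i (by omega) (by omega)]
        norm_num
      · have hcv' : (ccB m i).val = m - 1 - i.val := by rw [hccv, if_neg h0]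
        by_cases ha : i.val = 1
        · have h1 : ccB m i = b := Fin.ext (by rw [hcv', hbv]; omega)
          have h2 : i = a := Fin.ext (by rw [ha, hav])
          rw [h1, h2, hwa, hwb]; norm_num
        · by_cases hb : i.val = m - 2
          · have h1 : ccB m i = a := Fin.ext (by rw [hcv', hav]; omega)
            have h2 : i = b := Fin.ext (by rw [hb, hbv])
            rw [h1, h2, hwa, hwb]; norm_num
          · rw [hwother (ccB m i) (by rw [hcv']; omega) (by rw [hcv']; omega),
              hwother i ha hb]
            norm_num
  · -- quadratic case
    have hβ0 : β ≠ 0 := by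
      intro h; rw [h] at hβ; norm_num at hβ
    refine ⟨hβ0, ?_⟩
    have hγq : (-(1 / β)) ^ 2 - (m - 1 : ℝ) * (-(1 / β)) - 1 = 0 := by
      have h2 : (-(1 / β)) ^ 2 - (m - 1 : ℝ) * (-(1 / β)) - 1 =
          -(β ^ 2 - (m - 1 : ℝ) * β - 1) / β ^ 2 := by
        field_simp; ring
      rw [h2, hβ]; simp
    exact Bmat_quad_eigvec m hm hγq

end MyHelpers


/-- for odd `m > 3` and `G` nonsingular with property (SR), `F₁^m(G)` is
nonsingular and satisfies property (-R). -/
theorem stmt_18 (m : ℕ) (hm : 3 < m) (hodd : Odd m)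
    (V : Type) [Fintype V] [DecidableEq V] (G : SimpleGraph V) [DecidableRel G.Adj]
    (hns : IsUnit (G.adjMatrix ℝ))
    (hSR : ∀ lam : ℝ, 0 < eigMult (G.adjMatrix ℝ) lam →
      eigMult (G.adjMatrix ℝ) (1 / lam) = eigMult (G.adjMatrix ℝ) lam) :
    IsUnit (Matrix.kroneckerMap (· * ·) (Bmat m) (G.adjMatrix ℝ)) ∧
    ∀ μ : ℝ, 0 < eigMult (Matrix.kroneckerMap (· * ·) (Bmat m) (G.adjMatrix ℝ)) μ →
      0 < eigMult (Matrix.kroneckerMap (· * ·) (Bmat m) (G.adjMatrix ℝ)) (-(1 / μ)) := by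
  classical
  set A := G.adjMatrix ℝ with hAdef
  have hBh : (Bmat m).IsHermitian := Matrix.ext fun i j => by
    simp only [Matrix.conjTranspose_apply, star_trivial]
    exact Bmat_symm m j i
  have hAh : A.IsHermitian := Matrix.ext fun i j => by
    simp only [Matrix.conjTranspose_apply, star_trivial, hAdef, SimpleGraph.adjMatrix_apply]
    simp [SimpleGraph.adj_comm]
  set d := hBh.eigenvalues with hd
  set e := hAh.eigenvalues with he
  set K := Matrix.kroneckerMap (· * ·) (Bmat m) A with hK
  have hKeq : K = Matrix.kroneckerMap (· * ·) (Bmat m) A := rfl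
  have hKdet : ∀ μ : ℝ, (0 < eigMult K μ) ↔ ∃ p : Fin m × V, d p.1 * e p.2 = μ := by
    intro μ
    rw [my_eigMult_pos_iff_det, hKeq, my_kron_det_sub hBh hAh μ, Finset.prod_eq_zero_iff]
    simp [sub_eq_zero, hd, he]
  have hBidx : ∀ β : ℝ, (∃ v : Fin m → ℝ, v ≠ 0 ∧ Bmat m *ᵥ v = β • v) ↔ ∃ i, d i = β := by
    intro β
    rw [my_eig_iff_det, my_det_sub_smul hBh, Finset.prod_eq_zero_iff]
    simp [sub_eq_zero, hd, he]
  have hAidx : ∀ α' : ℝ, (0 < eigMult A α') ↔ ∃ j, e j = α' := by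
    intro α'
    rw [my_eigMult_pos_iff_det, my_det_sub_smul hAh, Finset.prod_eq_zero_iff]
    simp [sub_eq_zero, hd, he]
  have hd0 : ∀ i, d i ≠ 0 ∧ ∃ w : Fin m → ℝ, w ≠ 0 ∧ Bmat m *ᵥ w = (-(1 / d i)) • w := by
    intro i
    obtain ⟨v, hv, hveig⟩ := (hBidx (d i)).mpr ⟨i, rfl⟩
    exact Bmat_neg_inv_eig m hm (Bmat_eig_mem m hm hv hveig)
  have he0 : ∀ j, e j ≠ 0 := by
    have hdet : A.det ≠ 0 := ((Matrix.isUnit_iff_isUnit_det A).mp hns).ne_zero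
    have h0 : A.det = ∏ j, e j := by
      have := my_det_sub_smul hAh 0
      simpa using this
    rw [h0] at hdet
    intro j hj
    exact hdet (Finset.prod_eq_zero (Finset.mem_univ j) hj)
  constructor
  · rw [Matrix.isUnit_iff_isUnit_det, isUnit_iff_ne_zero]
    have h0 : K.det = ∏ p : Fin m × V, d p.1 * e p.2 := by
      have := my_kron_det_sub hBh hAh 0
      rw [← hKeq] at this
      simpa using this
    rw [h0]
    rw [Finset.prod_ne_zero_iff]
    intro p _
    exact mul_ne_zero (hd0 p.1).1 (he0 p.2)
  · intro μ hμ
    obtain ⟨p, hp⟩ := (hKdet μ).mp hμ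
    obtain ⟨hdne, w, hw, hweig⟩ := hd0 p.1
    obtain ⟨i', hi'⟩ := (hBidx (-(1 / d p.1))).mp ⟨w, hw, hweig⟩
    have hej : 0 < eigMult A (e p.2) := (hAidx (e p.2)).mpr ⟨p.2, rfl⟩
    have hinv : 0 < eigMult A (1 / e p.2) := by
      rw [hSR (e p.2) hej]; exact hej
    obtain ⟨j', hj'⟩ := (hAidx (1 / e p.2)).mp hinv
    refine (hKdet _).mpr ⟨(i', j'), ?_⟩
    rw [hi', hj', ← hp]
    have hene := he0 p.2
    field_simp


end
end
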